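/- arXiv:quant-ph/0503066 — 10 statements merged into one kernel-verified Lean document; each statement's English description precedes it below -/
import Mathlib

section
/- Let Ω be a finite set and ⪯ a weak order (reflexive, transitive, complete) over subsets of Ω. Then there exists a finitely additive probability measure μ on Ω such that A ⪯ B iff μ(A) ≤ μ(B) for all A, B ⊆ Ω, if and only if: (1) ∅ ⪯ A for every A ⊆ Ω; (2) ∅ ≺ Ω; (3) for every n, if A₁,…,Aₙ,B₁,…,Bₙ are subsets with ∑ᵢ 1_{Aᵢ} = ∑ᵢ 1_{Bᵢ} (as functions Ω → ℕ) and Aᵢ ⪯ Bᵢ for each i, then Aᵢ ∼ Bᵢ for each i. -/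
/-!
Encode `A ⪯ B` by the vector `(1_B - 1_A, [B ⋠ A])` of `ℚ^Ω × ℚ`. If `(0, 1)` were a nonnegative
combination of these vectors, clearing denominators would give a family of comparisons, repeated
with multiplicities, whose indicators balance and which contains a strict one, contradicting
cancellation. Farkas' lemma over `ℚ` therefore gives a linear functional that is nonnegative on the
encoding vectors and negative on `(0, 1)`; restricted to the vectors `(1_A, 0)` it is an additive
set function representing `⪯`, and normalizing it yields the probability. Conversely, an additive
representation turns balanced indicators into equal sums, so termwise inequalities are equalities.
-/

open Set

section Farkas

variable {𝕜 V : Type*} [Field 𝕜] [LinearOrder 𝕜] [IsStrictOrderedRing 𝕜]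
  [AddCommGroup V] [Module 𝕜 V]

lemma PointedCone.apply_nonneg_of_mem_hull {f : V →ₗ[𝕜] 𝕜} {s : Set V} (hs : ∀ x ∈ s, 0 ≤ f x)
    {x : V} (hx : x ∈ PointedCone.hull 𝕜 s) : 0 ≤ f x :=
  (Submodule.span_le (p := (PointedCone.positive 𝕜 𝕜).comap f)).mpr hs hx

lemma PointedCone.hull_image (φ : V →ₗ[𝕜] V) (s : Set V) :
    PointedCone.hull 𝕜 (φ '' s) = (PointedCone.hull 𝕜 s).map φ :=
  Submodule.span_image (φ : V →ₗ[{c : 𝕜 // 0 ≤ c}] V)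

theorem PointedCone.hyperplane_separation_of_notMem_hull_range_fin :
    ∀ {n : ℕ} (v : Fin n → V) {y : V}, y ∉ PointedCone.hull 𝕜 (range v) →
      ∃ f : V →ₗ[𝕜] 𝕜, (∀ i, 0 ≤ f (v i)) ∧ f y < 0
  | 0, v, y, hy => by
    have hy0 : y ≠ 0 := fun h => hy (h ▸ Submodule.zero_mem _)
    obtain ⟨f, hf⟩ := Module.Projective.exists_dual_eq_one 𝕜 hy0
    exact ⟨-f, finZeroElim, by simp [hf]⟩
  | n + 1, v, y, hy => by
    rw [Fin.range_fin_succ] at hy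
    obtain ⟨f, hfw, hfy⟩ := hyperplane_separation_of_notMem_hull_range_fin (Fin.tail v)
      fun h => hy (Submodule.span_mono (subset_insert _ _) h)
    rcases le_or_gt 0 (f (v 0)) with ha | ha
    · exact ⟨f, Fin.cases ha hfw, hfy⟩
    -- `φ` projects along `v 0` onto `ker f`; a separator of the projected cone, composed with
    -- `φ`, separates the original one.
    set φ : V →ₗ[𝕜] V := f (v 0) • LinearMap.id - f.smulRight (v 0)
    have hφa : φ (v 0) = 0 := by simp [φ]
    have hφy : φ y ∉ PointedCone.hull 𝕜 (range (φ ∘ Fin.tail v)) := by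
      rw [range_comp, PointedCone.hull_image]
      rintro ⟨z, hz, hφz⟩
      have hfz : 0 ≤ f z := PointedCone.apply_nonneg_of_mem_hull (by simpa using hfw) hz
      refine hy (Submodule.mem_span_insert.mpr ⟨⟨(f y - f z) / f (v 0), ?_⟩, z, hz, ?_⟩)
      · exact div_nonneg_of_nonpos (by linarith) ha.le
      · have hfa : f (v 0) ≠ 0 := ha.ne
        replace hφz : φ z = φ y := hφz
        simp only [φ, LinearMap.sub_apply, LinearMap.smul_apply, LinearMap.id_apply,
          LinearMap.smulRight_apply] at hφz
        rw [Nonneg.mk_smul]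
        apply smul_right_injective V hfa
        simp only [smul_add, smul_smul, mul_div_cancel₀ _ hfa]
        linear_combination (norm := module) -hφz
    obtain ⟨h, hhw, hhy⟩ := hyperplane_separation_of_notMem_hull_range_fin (φ ∘ Fin.tail v) hφy
    exact ⟨h ∘ₗ φ, Fin.cases (by simp [hφa]) hhw, hhy⟩

theorem PointedCone.hyperplane_separation_of_notMem_hull_range {ι : Type*} [Finite ι] (v : ι → V)
    {y : V} (hy : y ∉ PointedCone.hull 𝕜 (range v)) :
    ∃ f : V →ₗ[𝕜] 𝕜, (∀ i, 0 ≤ f (v i)) ∧ f y < 0 := by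
  obtain ⟨n, ⟨e⟩⟩ := Finite.exists_equiv_fin ι
  obtain ⟨f, hf, hfy⟩ := hyperplane_separation_of_notMem_hull_range_fin (v ∘ e.symm)
    (by rwa [e.symm.surjective.range_comp])
  exact ⟨f, fun i => by simpa using hf (e i), hfy⟩

end Farkas

lemma Rat.exists_nat_mul_eq_natCast {ι : Type*} [Fintype ι] (q : ι → ℚ) (hq : ∀ i, 0 ≤ q i) :
    ∃ N : ℕ, 0 < N ∧ ∀ i, ∃ m : ℕ, (N : ℚ) * q i = m := by
  refine ⟨∏ i, (q i).den, Finset.prod_pos fun i _ => (q i).den_pos, fun i => ?_⟩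
  obtain ⟨t, ht⟩ := Finset.dvd_prod_of_mem (fun i => (q i).den) (Finset.mem_univ i)
  refine ⟨t * (q i).num.toNat, ?_⟩
  rw [ht, Nat.cast_mul, Nat.cast_mul, mul_right_comm, Rat.den_mul_eq_num]
  have : ((q i).num.toNat : ℚ) = (q i).num := by
    exact_mod_cast Int.toNat_of_nonneg (Rat.num_nonneg.mpr (hq i))
  rw [this, mul_comm]

section AdditiveSetFunction

variable {Ω M : Type*} [AddCommGroup M] {μ : Set Ω → M}

lemma apply_empty_eq_zero_of_additive
    (hadd : ∀ A B : Set Ω, Disjoint A B → μ (A ∪ B) = μ A + μ B) : μ ∅ = 0 := by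
  simpa using hadd ∅ ∅ (disjoint_empty _)

variable [Fintype Ω]

lemma apply_eq_sum_indicator_nsmul_of_additive
    (hadd : ∀ A B : Set Ω, Disjoint A B → μ (A ∪ B) = μ A + μ B) (A : Set Ω) :
    μ A = ∑ ω, A.indicator (fun _ => 1) ω • μ {ω} := by
  classical
  have hfinset (s : Finset Ω) : μ s = ∑ ω ∈ s, μ {ω} := by
    induction s using Finset.induction_on with
    | empty => simpa using apply_empty_eq_zero_of_additive hadd
    | insert a s ha ih =>
      rw [Finset.sum_insert ha, ← ih, Finset.coe_insert, insert_eq,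
        hadd _ _ (disjoint_singleton_left.mpr (by simpa using ha))]
  rw [← A.coe_toFinset, hfinset]
  simp [Set.indicator_apply, ite_smul, ← Finset.sum_filter, Set.filter_mem_univ_eq_toFinset]

lemma sum_apply_eq_sum_indicator_nsmul_of_additive
    (hadd : ∀ A B : Set Ω, Disjoint A B → μ (A ∪ B) = μ A + μ B)
    {ι : Type*} [Fintype ι] (A : ι → Set Ω) :
    ∑ i, μ (A i) = ∑ ω, (∑ i, (A i).indicator (fun _ => 1) ω) • μ {ω} := by
  rw [Finset.sum_congr rfl fun i _ => apply_eq_sum_indicator_nsmul_of_additive hadd (A i),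
    Finset.sum_comm]
  simp only [Finset.sum_smul]

end AdditiveSetFunction

section Representation

variable {Ω : Type*} (le : Set Ω → Set Ω → Prop)

def IsCancellative : Prop :=
  ∀ n : ℕ, ∀ A B : Fin n → Set Ω,
    (∀ ω : Ω, ∑ i, (A i).indicator (fun _ => (1 : ℕ)) ω
        = ∑ i, (B i).indicator (fun _ => (1 : ℕ)) ω) →
    (∀ i, le (A i) (B i)) → ∀ i, le (A i) (B i) ∧ le (B i) (A i)

variable {le}

lemma exists_probability_rep_of_additive_rep {g : Set Ω → ℝ}
    (hadd : ∀ A B : Set Ω, Disjoint A B → g (A ∪ B) = g A + g B)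
    (hrep : ∀ A B, le A B ↔ g A ≤ g B) (hempty : ∀ A, le ∅ A) (huniv : ¬ le univ ∅) :
    ∃ μ : Set Ω → ℝ, (∀ A, 0 ≤ μ A) ∧ μ univ = 1 ∧
      (∀ A B : Set Ω, Disjoint A B → μ (A ∪ B) = μ A + μ B) ∧
      (∀ A B : Set Ω, le A B ↔ μ A ≤ μ B) := by
  have hg0 : g ∅ = 0 := apply_empty_eq_zero_of_additive hadd
  have hpos : 0 < g univ := by simpa [hrep, hg0] using huniv
  refine ⟨fun A => g A / g univ, fun A => div_nonneg ?_ hpos.le, div_self hpos.ne',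
    fun A B h => by simp only [hadd A B h, add_div], fun A B => by
      rw [hrep, div_le_div_iff_of_pos_right hpos]⟩
  simpa [hg0] using (hrep _ _).1 (hempty A)

lemma IsCancellative.le_of_sum_indicator_eq (hcanc : IsCancellative le) {κ : Type*} [Fintype κ]
    {A B : κ → Set Ω}
    (hind : ∀ ω, ∑ k, (A k).indicator (fun _ => 1) ω = ∑ k, (B k).indicator (fun _ => 1) ω)
    (hle : ∀ k, le (A k) (B k)) (k : κ) : le (B k) (A k) := by
  let e := Fintype.equivFin κ
  have := hcanc _ (A ∘ e.symm) (B ∘ e.symm)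
    (fun ω => by
      simp only [Function.comp_apply]
      rw [e.symm.sum_comp (fun k => (A k).indicator _ ω),
        e.symm.sum_comp (fun k => (B k).indicator _ ω)]
      exact hind ω)
    (fun j => hle _) (e k)
  simpa using this.2

noncomputable def indicatorVector (A : Set Ω) : Ω → ℚ :=
  fun ω => (A.indicator (fun _ => 1) ω : ℕ)

lemma indicatorVector_union {A B : Set Ω} (h : Disjoint A B) :
    indicatorVector (A ∪ B) = indicatorVector A + indicatorVector B := by
  ext ω
  simp [indicatorVector, Set.indicator_union_of_disjoint h]

open Classical in
variable (le) in
noncomputable def comparisonVector (A B : Set Ω) : (Ω → ℚ) × ℚ :=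
  (indicatorVector B - indicatorVector A, if le B A then 0 else 1)

variable [Fintype Ω]

lemma isCancellative_of_additive_rep {M : Type*} [AddCommGroup M] [PartialOrder M]
    [IsOrderedAddMonoid M] {μ : Set Ω → M}
    (hadd : ∀ A B : Set Ω, Disjoint A B → μ (A ∪ B) = μ A + μ B)
    (hrep : ∀ A B, le A B ↔ μ A ≤ μ B) : IsCancellative le := by
  intro n A B hind hle i
  have hsum : ∑ i, μ (A i) = ∑ i, μ (B i) := by
    simp only [sum_apply_eq_sum_indicator_nsmul_of_additive hadd, hind]
  have heq := (Finset.sum_eq_sum_iff_of_le fun i _ => (hrep _ _).1 (hle i)).1 hsum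
  exact ⟨hle i, (hrep _ _).2 (heq i (Finset.mem_univ i)).ge⟩

lemma IsCancellative.notMem_hull (hcanc : IsCancellative le) :
    ((0, 1) : (Ω → ℚ) × ℚ) ∉ PointedCone.hull ℚ
      (range fun p : {p : Set Ω × Set Ω // le p.1 p.2} => comparisonVector le p.1.1 p.1.2) := by
  classical
  rw [Submodule.mem_span_range_iff_exists_fun]
  rintro ⟨c, hcone⟩
  obtain ⟨N, hN, hm⟩ := Rat.exists_nat_mul_eq_natCast (fun p => (c p : ℚ)) fun p => (c p).2
  choose m hm using hm
  have hsum : ∑ p, (m p : ℚ) • comparisonVector le p.1.1 p.1.2 = ((0 : Ω → ℚ), (N : ℚ)) := by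
    simp_rw [← hm, mul_smul, ← Finset.smul_sum, Nonneg.coe_smul, hcone]
    simp
  obtain ⟨p, hmp, hstrict⟩ : ∃ p, m p ≠ 0 ∧ ¬ le p.1.2 p.1.1 := by
    have h2 := congrArg Prod.snd hsum
    simp only [Prod.snd_sum, comparisonVector, Prod.smul_mk, smul_eq_mul, mul_ite, mul_zero,
      mul_one] at h2
    obtain ⟨p, -, hp⟩ := Finset.exists_ne_zero_of_sum_ne_zero (h2.trans_ne (by positivity))
    split_ifs at hp with hle
    · exact absurd rfl hp
    · exact ⟨p, by exact_mod_cast hp, hle⟩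
  apply hstrict
  refine hcanc.le_of_sum_indicator_eq (κ := Σ p, Fin (m p)) (A := fun k => k.1.1.1)
    (B := fun k => k.1.1.2) ?_ (fun k => k.1.2) ⟨p, ⟨0, Nat.pos_of_ne_zero hmp⟩⟩
  intro ω
  have h1 := congrFun (congrArg Prod.fst hsum) ω
  simp only [Prod.fst_sum, Finset.sum_apply, comparisonVector, Prod.smul_mk, Pi.smul_apply,
    Pi.sub_apply, indicatorVector, smul_eq_mul, mul_sub, Finset.sum_sub_distrib,
    Pi.zero_apply, sub_eq_zero] at h1
  simp only [Fintype.sum_sigma, Finset.sum_const, Finset.card_univ, Fintype.card_fin,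
    smul_eq_mul]
  exact_mod_cast h1.symm

lemma IsCancellative.exists_additive_rep (htotal : ∀ A B, le A B ∨ le B A)
    (hcanc : IsCancellative le) :
    ∃ g : Set Ω → ℚ, (∀ A B : Set Ω, Disjoint A B → g (A ∪ B) = g A + g B) ∧
      ∀ A B, le A B ↔ g A ≤ g B := by
  classical
  obtain ⟨f, hf, hf01⟩ := PointedCone.hyperplane_separation_of_notMem_hull_range _ hcanc.notMem_hull
  set g : Set Ω → ℚ := fun A => f (indicatorVector A, 0)
  have hcomp (A B : Set Ω) :
      f (comparisonVector le A B) = g B - g A + (if le B A then 0 else 1) * f (0, 1) := by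
    have : comparisonVector le A B = (indicatorVector B, 0) - (indicatorVector A, 0)
        + (if le B A then (0 : ℚ) else 1) • ((0 : Ω → ℚ), (1 : ℚ)) := by
      by_cases hBA : le B A <;> ext <;> simp [comparisonVector, hBA]
    rw [this, map_add, map_sub, map_smul, smul_eq_mul]
  have hcompare (A B : Set Ω) (h : le A B) : g A ≤ g B ∧ (¬ le B A → g A < g B) := by
    have := hf ⟨(A, B), h⟩
    rw [hcomp] at this
    split_ifs at this with hBA
    · exact ⟨by linarith, absurd hBA⟩
    · exact ⟨by linarith, fun _ => by linarith⟩
  refine ⟨g, fun A B h => ?_, fun A B => ⟨fun h => (hcompare A B h).1, fun h => ?_⟩⟩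
  · simp only [g, indicatorVector_union h, ← map_add, Prod.mk_add_mk, add_zero]
  · by_contra hAB
    exact ((hcompare B A ((htotal A B).resolve_left hAB)).2 hAB).not_ge h

end Representation

theorem stmt0_general {Ω : Type*} [Fintype Ω] (le : Set Ω → Set Ω → Prop)
    (htotal : ∀ A B, le A B ∨ le B A) :
    (∃ μ : Set Ω → ℝ,
      (∀ A, 0 ≤ μ A) ∧ μ Set.univ = 1 ∧
      (∀ A B : Set Ω, Disjoint A B → μ (A ∪ B) = μ A + μ B) ∧
      (∀ A B : Set Ω, le A B ↔ μ A ≤ μ B)) ↔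
    ((∀ A : Set Ω, le ∅ A) ∧
     (le ∅ Set.univ ∧ ¬ le Set.univ ∅) ∧
     (∀ n : ℕ, ∀ A B : Fin n → Set Ω,
       (∀ ω : Ω, ∑ i, (A i).indicator (fun _ => (1 : ℕ)) ω
           = ∑ i, (B i).indicator (fun _ => (1 : ℕ)) ω) →
       (∀ i, le (A i) (B i)) →
       ∀ i, le (A i) (B i) ∧ le (B i) (A i))) := by
  constructor
  · rintro ⟨μ, hμ, hμuniv, hadd, hrep⟩
    have hμempty : μ ∅ = 0 := apply_empty_eq_zero_of_additive hadd
    refine ⟨fun A => (hrep _ _).2 (hμempty ▸ hμ A), ⟨(hrep _ _).2 ?_, ?_⟩,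
      isCancellative_of_additive_rep hadd hrep⟩ <;> simp [hrep, hμempty, hμuniv]
  · rintro ⟨hempty, ⟨-, huniv⟩, hcanc⟩
    obtain ⟨g, hadd, hrep⟩ := IsCancellative.exists_additive_rep htotal hcanc
    refine exists_probability_rep_of_additive_rep (g := fun A => (g A : ℝ))
      (fun A B h => by simp [hadd A B h]) (fun A B => ?_) hempty huniv
    rw [hrep]
    exact Rat.cast_le.symm

/-- A weak order on subsets of a finite set is represented by a
finitely additive probability measure iff it satisfies positivity,
non-triviality and the cancelation condition. -/
theorem stmt0 {Ω : Type*} [Fintype Ω] (le : Set Ω → Set Ω → Prop)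
    (hrefl : ∀ A, le A A)
    (htrans : ∀ A B C, le A B → le B C → le A C)
    (htotal : ∀ A B, le A B ∨ le B A) :
    (∃ μ : Set Ω → ℝ,
      (∀ A, 0 ≤ μ A) ∧ μ Set.univ = 1 ∧
      (∀ A B : Set Ω, Disjoint A B → μ (A ∪ B) = μ A + μ B) ∧
      (∀ A B : Set Ω, le A B ↔ μ A ≤ μ B)) ↔
    ((∀ A : Set Ω, le ∅ A) ∧
     (le ∅ Set.univ ∧ ¬ le Set.univ ∅) ∧
     (∀ n : ℕ, ∀ A B : Fin n → Set Ω,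
       (∀ ω : Ω, ∑ i, (A i).indicator (fun _ => (1 : ℕ)) ω
           = ∑ i, (B i).indicator (fun _ => (1 : ℕ)) ω) →
       (∀ i, le (A i) (B i)) →
       ∀ i, le (A i) (B i) ∧ le (B i) (A i))) :=
  stmt0_general le htotal
end

section
/- Let H be a real inner product space and p, q, r unit vectors with q ⪯ r under a weak order ⪯ on one-dimensional subspaces (identified with unit vectors up to sign) satisfying the standard assumptions (de Finetti, Negation, Monotonicity) of a likelihood order on all subspaces of H. If q ≠ ±r, and q', r' are unit vectors in span{q,r} with q' ⊥ q and r' ⊥ r, then span{r'} ⪯ span{q'}. -/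
/-!
Write `U = span {q, r}`. Inside the plane `U` the orthogonal complement of the line `ℝ ∙ q` is
the line `ℝ ∙ q'`, so `(ℝ ∙ q)ᗮ = (ℝ ∙ q') ⊔ Uᗮ`, and likewise `(ℝ ∙ r)ᗮ = (ℝ ∙ r') ⊔ Uᗮ`.
Negation turns `ℝ ∙ q ⪯ ℝ ∙ r` into `(ℝ ∙ r') ⊔ Uᗮ ⪯ (ℝ ∙ q') ⊔ Uᗮ`, and since `Uᗮ` is orthogonal
to both lines, de Finetti cancels the common summand `Uᗮ`.
-/

open Module Submodule

namespace Submodule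

variable {𝕜 E : Type*} [RCLike 𝕜] [NormedAddCommGroup E] [InnerProductSpace 𝕜 E]

theorem orthogonal_span_singleton_eq_inf_sup_orthogonal {K : Submodule 𝕜 E}
    [K.HasOrthogonalProjection] {q : E} (hq : q ∈ K) :
    (𝕜 ∙ q)ᗮ = (𝕜 ∙ q)ᗮ ⊓ K ⊔ Kᗮ := by
  have hle : Kᗮ ≤ (𝕜 ∙ q)ᗮ := orthogonal_le ((span_singleton_le_iff_mem q K).mpr hq)
  have h := (sup_orthogonal_inf_of_hasOrthogonalProjection hle).symm
  rwa [orthogonal_orthogonal, sup_comm, inf_comm] at h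

theorem finrank_span_pair_le (q v : E) : finrank 𝕜 (span 𝕜 {q, v}) ≤ 2 := by
  classical
  have h := (finrank_span_finset_le_card (R := 𝕜) ({q, v} : Finset E)).trans Finset.card_le_two
  rwa [Set.finrank, Finset.coe_insert, Finset.coe_singleton] at h

theorem orthogonal_span_singleton_inf_span_pair {q q' v : E} (hq : q ≠ 0) (hq' : q' ≠ 0)
    (hq'mem : q' ∈ span 𝕜 {q, v}) (horth : inner 𝕜 q' q = 0) :
    (𝕜 ∙ q)ᗮ ⊓ span 𝕜 {q, v} = 𝕜 ∙ q' := by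
  have hle : 𝕜 ∙ q ≤ span 𝕜 {q, v} := span_mono (by simp)
  have : FiniteDimensional 𝕜 (span 𝕜 {q, v}) := .span_of_finite 𝕜 (by simp)
  have hrank : finrank 𝕜 ((𝕜 ∙ q)ᗮ ⊓ span 𝕜 {q, v} : Submodule 𝕜 E) ≤ 1 := by
    have := finrank_add_inf_finrank_orthogonal hle
    have := finrank_span_pair_le (𝕜 := 𝕜) q v
    rw [finrank_span_singleton hq] at *
    omega
  have : FiniteDimensional 𝕜 ((𝕜 ∙ q)ᗮ ⊓ span 𝕜 {q, v} : Submodule 𝕜 E) :=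
    finiteDimensional_of_le inf_le_right
  refine (eq_of_le_of_finrank_le ?_ (by rwa [finrank_span_singleton hq'])).symm
  rw [span_singleton_le_iff_mem]
  exact ⟨mem_orthogonal_singleton_iff_inner_left.mpr horth, hq'mem⟩

theorem orthogonal_span_singleton_eq_span_singleton_sup {q q' v : E} (hq : q ≠ 0) (hq' : q' ≠ 0)
    (hq'mem : q' ∈ span 𝕜 {q, v}) (horth : inner 𝕜 q' q = 0) :
    (𝕜 ∙ q)ᗮ = (𝕜 ∙ q') ⊔ (span 𝕜 {q, v})ᗮ := by
  have : FiniteDimensional 𝕜 (span 𝕜 {q, v}) := .span_of_finite 𝕜 (by simp)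
  rw [orthogonal_span_singleton_eq_inf_sup_orthogonal (subset_span (by simp) : q ∈ span 𝕜 {q, v}),
    orthogonal_span_singleton_inf_span_pair hq hq' hq'mem horth]

end Submodule

theorem stmt4_general {H : Type*} [NormedAddCommGroup H] [InnerProductSpace ℝ H]
    (le : Submodule ℝ H → Submodule ℝ H → Prop)
    (hdeFinetti : ∀ A B C : Submodule ℝ H, C ⟂ A → C ⟂ B →
      (le A B ↔ le (A ⊔ C) (B ⊔ C)))
    (hneg : ∀ A B : Submodule ℝ H, le A B → le Bᗮ Aᗮ)
    (q r q' r' : H)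
    (hq : ‖q‖ = 1) (hr : ‖r‖ = 1) (hq' : ‖q'‖ = 1) (hr' : ‖r'‖ = 1)
    (hqr : le (Submodule.span ℝ {q}) (Submodule.span ℝ {r}))
    (hq'mem : q' ∈ Submodule.span ℝ {q, r}) (hr'mem : r' ∈ Submodule.span ℝ {q, r})
    (hq'q : inner ℝ q' q = (0 : ℝ)) (hr'r : inner ℝ r' r = (0 : ℝ)) :
    le (Submodule.span ℝ {r'}) (Submodule.span ℝ {q'}) := by
  have ne_zero_of_norm {x : H} (hx : ‖x‖ = 1) : x ≠ 0 := norm_ne_zero_iff.mp (by simp [hx])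
  have hQ := orthogonal_span_singleton_eq_span_singleton_sup (ne_zero_of_norm hq)
    (ne_zero_of_norm hq') hq'mem hq'q
  have hR := orthogonal_span_singleton_eq_span_singleton_sup (ne_zero_of_norm hr)
    (ne_zero_of_norm hr') (by rwa [Set.pair_comm]) hr'r
  rw [Set.pair_comm] at hR
  have hperp {x : H} (hx : x ∈ span ℝ {q, r}) : (span ℝ {q, r})ᗮ ⟂ ℝ ∙ x :=
    (isOrtho_orthogonal_left _).mono_right ((span_singleton_le_iff_mem _ _).mpr hx)
  refine (hdeFinetti _ _ _ (hperp hr'mem) (hperp hq'mem)).mpr ?_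
  rw [← hQ, ← hR]
  exact hneg _ _ hqr

/-- Claim 0 of the paper: if q ⪯ r then, taking orthogonal
complements within the plane span{q,r}, r' ⪯ q'. -/
theorem stmt4 {H : Type*} [NormedAddCommGroup H] [InnerProductSpace ℝ H]
    (le : Submodule ℝ H → Submodule ℝ H → Prop)
    (hrefl : ∀ A, le A A)
    (htrans : ∀ A B C, le A B → le B C → le A C)
    (htotal : ∀ A B, le A B ∨ le B A)
    (hdeFinetti : ∀ A B C : Submodule ℝ H, C ⟂ A → C ⟂ B →
      (le A B ↔ le (A ⊔ C) (B ⊔ C)))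
    (hneg : ∀ A B : Submodule ℝ H, le A B → le Bᗮ Aᗮ)
    (hmono : ∀ A : Submodule ℝ H, le ⊥ A)
    (q r q' r' : H)
    (hq : ‖q‖ = 1) (hr : ‖r‖ = 1) (hq' : ‖q'‖ = 1) (hr' : ‖r'‖ = 1)
    (hne : q ≠ r ∧ q ≠ -r)
    (hqr : le (Submodule.span ℝ {q}) (Submodule.span ℝ {r}))
    (hq'mem : q' ∈ Submodule.span ℝ {q, r}) (hr'mem : r' ∈ Submodule.span ℝ {q, r})
    (hq'q : inner ℝ q' q = (0 : ℝ)) (hr'r : inner ℝ r' r = (0 : ℝ)) :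
    le (Submodule.span ℝ {r'}) (Submodule.span ℝ {q'}) :=
  stmt4_general le hdeFinetti hneg q r q' r' hq hr hq' hr' hqr hq'mem hr'mem hq'q hr'r
end

section
/- Let ⪯ be a weak order on subspaces of ℝ³ satisfying the standard assumptions, and let m be a one-dimensional subspace minimal with respect to ⪯ among one-dimensional subspaces. If u₁, u₂ are orthogonal one-dimensional subspaces with u₁ ∼ u₂ ∼ m, then every one-dimensional subspace u contained in u₁ + u₂ satisfies u ∼ m. -/
/-!
Let `P = u₁ + u₂` and let `u'` be the line of `P` orthogonal to `u`. Minimality of `m` gives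
`u₂ ⪯ m ⪯ u'`. Adding the line `Pᗮ`, which is orthogonal to both, de Finetti turns this into
`u₁ᗮ = u₂ + Pᗮ ⪯ u' + Pᗮ = uᗮ`, and negation into `u ⪯ u₁ ⪯ m`. The reverse `m ⪯ u` is
minimality again.
-/

namespace Submodule

variable {𝕜 E : Type*} [RCLike 𝕜] [NormedAddCommGroup E] [InnerProductSpace 𝕜 E]

theorem IsOrtho.orthogonal_inf_sup_eq {U V : Submodule 𝕜 E} (h : U ⟂ V) : Uᗮ ⊓ (U ⊔ V) = V := by
  rw [inf_comm, sup_comm, sup_inf_assoc_of_le U h.symm.le, inf_orthogonal_eq_bot, sup_bot_eq]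

theorem IsOrtho.finrank_sup {U V : Submodule 𝕜 E} [FiniteDimensional 𝕜 U] [FiniteDimensional 𝕜 V]
    (h : U ⟂ V) : Module.finrank 𝕜 ↥(U ⊔ V) = Module.finrank 𝕜 U + Module.finrank 𝕜 V := by
  rw [← finrank_sup_add_finrank_inf_eq, h.disjoint.eq_bot, finrank_bot, add_zero]

theorem orthogonal_eq_orthogonal_inf_sup_orthogonal {K P : Submodule 𝕜 E}
    [P.HasOrthogonalProjection] (h : K ≤ P) : Kᗮ = Kᗮ ⊓ P ⊔ Pᗮ := by
  have := sup_orthogonal_inf_of_hasOrthogonalProjection (orthogonal_le h)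
  rwa [orthogonal_orthogonal, inf_comm, sup_comm, eq_comm] at this

end Submodule

open Submodule

section

variable {𝕜 E : Type*} [RCLike 𝕜] [NormedAddCommGroup E] [InnerProductSpace 𝕜 E]
  [FiniteDimensional 𝕜 E]

theorem le_of_isOrtho_of_le_orthogonal_inf (le : Submodule 𝕜 E → Submodule 𝕜 E → Prop)
    (hdeFinetti : ∀ A B C, C ⟂ A → C ⟂ B → (le A B ↔ le (A ⊔ C) (B ⊔ C)))
    (hneg : ∀ A B, le A B → le Bᗮ Aᗮ) {u u₁ u₂ : Submodule 𝕜 E} (hperp : u₁ ⟂ u₂)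
    (hu : u ≤ u₁ ⊔ u₂) (h : le u₂ (uᗮ ⊓ (u₁ ⊔ u₂))) : le u u₁ := by
  have hcompl₁ : u₁ᗮ = u₂ ⊔ (u₁ ⊔ u₂)ᗮ := by
    rw [orthogonal_eq_orthogonal_inf_sup_orthogonal (le_sup_left : u₁ ≤ u₁ ⊔ u₂),
      hperp.orthogonal_inf_sup_eq]
  have hcompl : uᗮ = uᗮ ⊓ (u₁ ⊔ u₂) ⊔ (u₁ ⊔ u₂)ᗮ :=
    orthogonal_eq_orthogonal_inf_sup_orthogonal hu
  have hsum : le u₁ᗮ uᗮ := by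
    rw [hcompl₁, hcompl]
    exact (hdeFinetti _ _ _ (orthogonal_le le_sup_right) (orthogonal_le inf_le_right)).mp h
  simpa only [orthogonal_orthogonal] using hneg _ _ hsum

end

theorem stmt5_general
    (le : Submodule ℝ (EuclideanSpace ℝ (Fin 3)) →
          Submodule ℝ (EuclideanSpace ℝ (Fin 3)) → Prop)
    (htrans : ∀ A B C, le A B → le B C → le A C)
    (hdeFinetti : ∀ A B C, C ⟂ A → C ⟂ B → (le A B ↔ le (A ⊔ C) (B ⊔ C)))
    (hneg : ∀ A B, le A B → le Bᗮ Aᗮ)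
    (m : Submodule ℝ (EuclideanSpace ℝ (Fin 3)))
    (hmin : ∀ v : Submodule ℝ (EuclideanSpace ℝ (Fin 3)),
      Module.finrank ℝ v = 1 → le m v)
    (u₁ u₂ : Submodule ℝ (EuclideanSpace ℝ (Fin 3)))
    (hu₁ : Module.finrank ℝ u₁ = 1) (hu₂ : Module.finrank ℝ u₂ = 1)
    (hperp : u₁ ⟂ u₂)
    (h₁ : le u₁ m ∧ le m u₁) (h₂ : le u₂ m ∧ le m u₂) :
    ∀ u : Submodule ℝ (EuclideanSpace ℝ (Fin 3)),
      Module.finrank ℝ u = 1 → u ≤ u₁ ⊔ u₂ → le u m ∧ le m u := by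
  intro u hu hle
  have hplane : Module.finrank ℝ ↥(u₁ ⊔ u₂) = 2 := by rw [hperp.finrank_sup, hu₁, hu₂]
  have hline : Module.finrank ℝ ↥(uᗮ ⊓ (u₁ ⊔ u₂)) = 1 :=
    finrank_add_inf_finrank_orthogonal' hle (by rw [hu, hplane])
  have hu₂_le : le u₂ (uᗮ ⊓ (u₁ ⊔ u₂)) := htrans _ _ _ h₂.1 (hmin _ hline)
  exact ⟨htrans _ _ _ (le_of_isOrtho_of_le_orthogonal_inf le hdeFinetti hneg hperp hle hu₂_le)
    h₁.1, hmin u hu⟩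

/-- Claim 2 of the paper: if two orthogonal lines are both
equivalent to the minimal line m, then every line in their span is
equivalent to m. -/
theorem stmt5
    (le : Submodule ℝ (EuclideanSpace ℝ (Fin 3)) →
          Submodule ℝ (EuclideanSpace ℝ (Fin 3)) → Prop)
    (hrefl : ∀ A, le A A)
    (htrans : ∀ A B C, le A B → le B C → le A C)
    (htotal : ∀ A B, le A B ∨ le B A)
    (hdeFinetti : ∀ A B C, C ⟂ A → C ⟂ B → (le A B ↔ le (A ⊔ C) (B ⊔ C)))
    (hneg : ∀ A B, le A B → le Bᗮ Aᗮ)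
    (hmono : ∀ A, le ⊥ A)
    (m : Submodule ℝ (EuclideanSpace ℝ (Fin 3)))
    (hm : Module.finrank ℝ m = 1)
    (hmin : ∀ v : Submodule ℝ (EuclideanSpace ℝ (Fin 3)),
      Module.finrank ℝ v = 1 → le m v)
    (u₁ u₂ : Submodule ℝ (EuclideanSpace ℝ (Fin 3)))
    (hu₁ : Module.finrank ℝ u₁ = 1) (hu₂ : Module.finrank ℝ u₂ = 1)
    (hperp : u₁ ⟂ u₂)
    (h₁ : le u₁ m ∧ le m u₁) (h₂ : le u₂ m ∧ le m u₂) :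
    ∀ u : Submodule ℝ (EuclideanSpace ℝ (Fin 3)),
      Module.finrank ℝ u = 1 → u ≤ u₁ ⊔ u₂ → le u m ∧ le m u :=
  stmt5_general le htrans hdeFinetti hneg m hmin u₁ u₂ hu₁ hu₂ hperp h₁ h₂
end

section
/- Let ⪯ be a weak order on subspaces of ℝ³ satisfying the standard assumptions, with m a minimal one-dimensional subspace. If there exists an orthogonal triple of one-dimensional subspaces u₁, u₂, u₃ with u₁ ∼ u₂ ∼ u₃ ∼ m, then every one-dimensional subspace v of ℝ³ satisfies v ∼ m (the order is uniform on lines). -/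
/-!
Let `a ⟂ b` be lines with `a, b ⪯ m`, put `P = a ⊔ b`, and let `v ≤ P` be a line. Writing
`x' = xᗮ ⊓ P` for the orthogonal complement of a line inside `P`, one has `(x' ⊔ Pᗮ)ᗮ = x`,
so de Finetti's axiom (adding `Pᗮ`) followed by negation turns `b' ⪯ v'` into `v ⪯ b`.
Since `b' = a ⪯ m ⪯ v'` by minimality, every line of `P` is `⪯ m`. Applying this first to
`u₁ ⊔ u₂` and then to `u₃ ⊔ w`, where `w` is the line in which `v ⊔ u₃` meets `u₃ᗮ = u₁ ⊔ u₂`,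
gives `v ⪯ m`; the converse is minimality of `m`.
-/

open Module Submodule

section Lines

variable {K V : Type*} [DivisionRing K] [AddCommGroup V] [Module K V] [FiniteDimensional K V]

theorem Submodule.finrank_sup_of_disjoint {a b : Submodule K V} (h : Disjoint a b) :
    finrank K ↥(a ⊔ b) = finrank K a + finrank K b := by
  have := finrank_sup_add_finrank_inf_eq a b
  rwa [h.eq_bot, finrank_bot, add_zero] at this

theorem Submodule.disjoint_of_finrank_eq_one_of_not_le {v u : Submodule K V}
    (hv : finrank K v = 1) (hvu : ¬v ≤ u) : Disjoint v u := by
  have hlt := finrank_lt_finrank_of_lt (inf_lt_left.mpr hvu)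
  rw [hv, Nat.lt_one_iff, finrank_eq_zero] at hlt
  exact disjoint_iff.mpr hlt

end Lines

section Geometry

variable {E : Type*} [NormedAddCommGroup E] [InnerProductSpace ℝ E]

theorem Submodule.inf_sup_of_isOrtho {a b : Submodule ℝ E} (hab : a ⟂ b) :
    bᗮ ⊓ (a ⊔ b) = a := by
  rw [inf_comm, sup_inf_assoc_of_le _ hab.le, inf_orthogonal_eq_bot, sup_bot_eq]

variable [FiniteDimensional ℝ E]

theorem Submodule.orthogonal_inf_sup_orthogonal {x P : Submodule ℝ E} (hx : x ≤ P) :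
    (xᗮ ⊓ P ⊔ Pᗮ)ᗮ = x := by
  have h := sup_orthogonal_inf_of_hasOrthogonalProjection (orthogonal_le hx)
  rw [orthogonal_orthogonal, inf_comm] at h
  rw [sup_comm, h, orthogonal_orthogonal]

theorem Submodule.orthogonal_eq_sup_of_isOrtho {a b c : Submodule ℝ E}
    (hab : a ⟂ b) (hac : a ⟂ c) (hbc : b ⟂ c)
    (hdim : finrank ℝ a + finrank ℝ b + finrank ℝ c = finrank ℝ E) :
    cᗮ = a ⊔ b := by
  refine (eq_of_le_of_finrank_eq (isOrtho_sup_left.mpr ⟨hac, hbc⟩).le ?_).symm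
  have := finrank_add_finrank_orthogonal c
  rw [finrank_sup_of_disjoint hab.disjoint]
  omega

end Geometry

section Order

variable {E : Type*} [NormedAddCommGroup E] [InnerProductSpace ℝ E] [FiniteDimensional ℝ E]
  {le : Submodule ℝ E → Submodule ℝ E → Prop}

theorem le_of_le_orthogonal_inf
    (hdeFinetti : ∀ A B C, C ⟂ A → C ⟂ B → (le A B ↔ le (A ⊔ C) (B ⊔ C)))
    (hneg : ∀ A B, le A B → le Bᗮ Aᗮ) {x y P : Submodule ℝ E} (hx : x ≤ P) (hy : y ≤ P)
    (h : le (yᗮ ⊓ P) (xᗮ ⊓ P)) : le x y := by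
  have hsup := (hdeFinetti _ _ Pᗮ (isOrtho_orthogonal_left P |>.mono_right inf_le_right)
    (isOrtho_orthogonal_left P |>.mono_right inf_le_right)).mp h
  simpa only [orthogonal_inf_sup_orthogonal hx, orthogonal_inf_sup_orthogonal hy]
    using hneg _ _ hsup

theorem le_of_le_sup_of_isOrtho
    (htrans : ∀ A B C, le A B → le B C → le A C)
    (hdeFinetti : ∀ A B C, C ⟂ A → C ⟂ B → (le A B ↔ le (A ⊔ C) (B ⊔ C)))
    (hneg : ∀ A B, le A B → le Bᗮ Aᗮ) {m : Submodule ℝ E}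
    (hmin : ∀ v : Submodule ℝ E, finrank ℝ v = 1 → le m v)
    {a b : Submodule ℝ E} (ha : finrank ℝ a = 1) (hb : finrank ℝ b = 1) (hab : a ⟂ b)
    (ham : le a m) (hbm : le b m) {v : Submodule ℝ E} (hv : finrank ℝ v = 1)
    (hvab : v ≤ a ⊔ b) : le v m := by
  have hv' : finrank ℝ ↥(vᗮ ⊓ (a ⊔ b)) = 1 :=
    finrank_add_inf_finrank_orthogonal' hvab
      (by rw [finrank_sup_of_disjoint hab.disjoint, ha, hb, hv])
  have hav' : le (bᗮ ⊓ (a ⊔ b)) (vᗮ ⊓ (a ⊔ b)) := by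
    rw [inf_sup_of_isOrtho hab]
    exact htrans _ _ _ ham (hmin _ hv')
  exact htrans _ _ _ (le_of_le_orthogonal_inf hdeFinetti hneg hvab le_sup_right hav') hbm

end Order

theorem stmt6_general
    (le : Submodule ℝ (EuclideanSpace ℝ (Fin 3)) →
          Submodule ℝ (EuclideanSpace ℝ (Fin 3)) → Prop)
    (htrans : ∀ A B C, le A B → le B C → le A C)
    (hdeFinetti : ∀ A B C, C ⟂ A → C ⟂ B → (le A B ↔ le (A ⊔ C) (B ⊔ C)))
    (hneg : ∀ A B, le A B → le Bᗮ Aᗮ)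
    (m : Submodule ℝ (EuclideanSpace ℝ (Fin 3)))
    (hmin : ∀ v : Submodule ℝ (EuclideanSpace ℝ (Fin 3)),
      Module.finrank ℝ v = 1 → le m v)
    (u₁ u₂ u₃ : Submodule ℝ (EuclideanSpace ℝ (Fin 3)))
    (hu₁ : Module.finrank ℝ u₁ = 1) (hu₂ : Module.finrank ℝ u₂ = 1)
    (hu₃ : Module.finrank ℝ u₃ = 1)
    (h12 : u₁ ⟂ u₂) (h13 : u₁ ⟂ u₃) (h23 : u₂ ⟂ u₃)
    (h₁ : le u₁ m ∧ le m u₁) (h₂ : le u₂ m ∧ le m u₂) (h₃ : le u₃ m ∧ le m u₃) :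
    ∀ v : Submodule ℝ (EuclideanSpace ℝ (Fin 3)),
      Module.finrank ℝ v = 1 → le v m ∧ le m v := by
  intro v hv
  refine ⟨?_, hmin v hv⟩
  by_cases hvu₃ : v ≤ u₃
  · rw [eq_of_le_of_finrank_eq hvu₃ (hv.trans hu₃.symm)]
    exact h₃.1
  set w := u₃ᗮ ⊓ (v ⊔ u₃)
  have hw : finrank ℝ w = 1 := finrank_add_inf_finrank_orthogonal' le_sup_right
    (by rw [finrank_sup_of_disjoint (disjoint_of_finrank_eq_one_of_not_le hv hvu₃), hv, hu₃])
  have hwP : w ≤ u₁ ⊔ u₂ := by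
    rw [← orthogonal_eq_sup_of_isOrtho h12 h13 h23 (by simp [hu₁, hu₂, hu₃])]
    exact inf_le_left
  have hvw : v ≤ u₃ ⊔ w := by
    rw [sup_orthogonal_inf_of_hasOrthogonalProjection le_sup_right]
    exact le_sup_left
  have hwm : le w m :=
    le_of_le_sup_of_isOrtho htrans hdeFinetti hneg hmin hu₁ hu₂ h12 h₁.1 h₂.1 hw hwP
  exact le_of_le_sup_of_isOrtho htrans hdeFinetti hneg hmin hu₃ hw
    ((isOrtho_orthogonal_right u₃).mono_right inf_le_left) h₃.1 hwm hv hvw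

/-- Claim 3 of the paper: if an orthogonal triple of lines is
equivalent to the minimal line m, then the order is uniform on lines. -/
theorem stmt6
    (le : Submodule ℝ (EuclideanSpace ℝ (Fin 3)) →
          Submodule ℝ (EuclideanSpace ℝ (Fin 3)) → Prop)
    (hrefl : ∀ A, le A A)
    (htrans : ∀ A B C, le A B → le B C → le A C)
    (htotal : ∀ A B, le A B ∨ le B A)
    (hdeFinetti : ∀ A B C, C ⟂ A → C ⟂ B → (le A B ↔ le (A ⊔ C) (B ⊔ C)))
    (hneg : ∀ A B, le A B → le Bᗮ Aᗮ)
    (hmono : ∀ A, le ⊥ A)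
    (m : Submodule ℝ (EuclideanSpace ℝ (Fin 3)))
    (hm : Module.finrank ℝ m = 1)
    (hmin : ∀ v : Submodule ℝ (EuclideanSpace ℝ (Fin 3)),
      Module.finrank ℝ v = 1 → le m v)
    (u₁ u₂ u₃ : Submodule ℝ (EuclideanSpace ℝ (Fin 3)))
    (hu₁ : Module.finrank ℝ u₁ = 1) (hu₂ : Module.finrank ℝ u₂ = 1)
    (hu₃ : Module.finrank ℝ u₃ = 1)
    (h12 : u₁ ⟂ u₂) (h13 : u₁ ⟂ u₃) (h23 : u₂ ⟂ u₃)
    (h₁ : le u₁ m ∧ le m u₁) (h₂ : le u₂ m ∧ le m u₂) (h₃ : le u₃ m ∧ le m u₃) :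
    ∀ v : Submodule ℝ (EuclideanSpace ℝ (Fin 3)),
      Module.finrank ℝ v = 1 → le v m ∧ le m v :=
  stmt6_general le htrans hdeFinetti hneg m hmin u₁ u₂ u₃ hu₁ hu₂ hu₃ h12 h13 h23 h₁ h₂ h₃
end

section
/- Let H be a finite-dimensional Hilbert space and ⪯ a weak order on subspaces satisfying de Finetti's axiom. Suppose A is spanned by orthogonal vectors u₁,…,u_k and span{uᵢ} ∼ {0} for every i. Then A ∼ {0}. -/
/-!
Induction on the number of vectors. If `B ∼ ⊥` and `C ⟂ B`, then de Finetti's axiom with the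
orthogonal summand `C` turns `B ∼ ⊥` into `B ⊔ C ∼ C`; so adjoining to `B` the span `C` of one
more vector orthogonal to it, with `C ∼ ⊥`, gives `B ⊔ C ∼ ⊥` by transitivity.
-/

section DeFinetti

variable {𝕜 E : Type*} [RCLike 𝕜] [NormedAddCommGroup E] [InnerProductSpace 𝕜 E]

lemma sup_equiv_of_equiv_bot (le : Submodule 𝕜 E → Submodule 𝕜 E → Prop)
    (hdeFinetti : ∀ A B C : Submodule 𝕜 E, C ⟂ A → C ⟂ B →
      (le A B ↔ le (A ⊔ C) (B ⊔ C)))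
    {B C : Submodule 𝕜 E} (hCB : C ⟂ B) (hB : le B ⊥ ∧ le ⊥ B) :
    le (B ⊔ C) C ∧ le C (B ⊔ C) := by
  have hCbot : C ⟂ (⊥ : Submodule 𝕜 E) := Submodule.isOrtho_bot_right
  have h₁ := (hdeFinetti B ⊥ C hCB hCbot).mp hB.1
  have h₂ := (hdeFinetti ⊥ B C hCbot hCB).mp hB.2
  rw [bot_sup_eq] at h₁ h₂
  exact ⟨h₁, h₂⟩

lemma span_range_equiv_bot_of_orthogonal (le : Submodule 𝕜 E → Submodule 𝕜 E → Prop)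
    (hrefl : ∀ A, le A A) (htrans : ∀ A B C, le A B → le B C → le A C)
    (hdeFinetti : ∀ A B C : Submodule 𝕜 E, C ⟂ A → C ⟂ B →
      (le A B ↔ le (A ⊔ C) (B ⊔ C)))
    {k : ℕ} (u : Fin k → E) (horth : Pairwise fun i j ↦ inner 𝕜 (u i) (u j) = 0)
    (hu : ∀ i, le (Submodule.span 𝕜 {u i}) ⊥ ∧ le ⊥ (Submodule.span 𝕜 {u i})) :
    le (Submodule.span 𝕜 (Set.range u)) ⊥ ∧ le ⊥ (Submodule.span 𝕜 (Set.range u)) := by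
  induction k with
  | zero => simpa only [Set.range_eq_empty, Submodule.span_empty] using ⟨hrefl ⊥, hrefl ⊥⟩
  | succ n ih =>
    rw [Fin.range_fin_succ, Submodule.span_insert, sup_comm]
    have hperp : Submodule.span 𝕜 {u 0} ⟂ Submodule.span 𝕜 (Set.range (u ∘ Fin.succ)) := by
      rw [Submodule.isOrtho_span]
      rintro _ rfl _ ⟨i, rfl⟩
      exact horth (Fin.succ_ne_zero i).symm
    have htail := ih (u ∘ Fin.succ) (fun i j hij ↦ horth (Fin.succ_injective _ |>.ne hij))
      (fun i ↦ hu i.succ)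
    obtain ⟨hle, hge⟩ := sup_equiv_of_equiv_bot le hdeFinetti hperp htail
    exact ⟨htrans _ _ _ hle (hu 0).1, htrans _ _ _ (hu 0).2 hge⟩

end DeFinetti

theorem stmt8_general {H : Type*} [NormedAddCommGroup H] [InnerProductSpace ℂ H]
    (le : Submodule ℂ H → Submodule ℂ H → Prop)
    (hrefl : ∀ A, le A A)
    (htrans : ∀ A B C, le A B → le B C → le A C)
    (hdeFinetti : ∀ A B C : Submodule ℂ H, C ⟂ A → C ⟂ B →
      (le A B ↔ le (A ⊔ C) (B ⊔ C)))
    (k : ℕ) (u : Fin k → H)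
    (horth : ∀ i j, i ≠ j → inner ℂ (u i) (u j) = (0 : ℂ))
    (A : Submodule ℂ H) (hA : A = Submodule.span ℂ (Set.range u))
    (hu : ∀ i, le (Submodule.span ℂ {u i}) ⊥ ∧ le ⊥ (Submodule.span ℂ {u i})) :
    le A ⊥ ∧ le ⊥ A :=
  hA ▸ span_range_equiv_bot_of_orthogonal le hrefl htrans hdeFinetti u
    (fun _ _ hij ↦ horth _ _ hij) hu

/-- Claim `non-trivial` of the paper: if A is spanned by
orthogonal vectors each of whose spans is equivalent to {0}, then A ∼ {0}. -/
theorem stmt8 {H : Type*} [NormedAddCommGroup H] [InnerProductSpace ℂ H]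
    [FiniteDimensional ℂ H]
    (le : Submodule ℂ H → Submodule ℂ H → Prop)
    (hrefl : ∀ A, le A A)
    (htrans : ∀ A B C, le A B → le B C → le A C)
    (htotal : ∀ A B, le A B ∨ le B A)
    (hdeFinetti : ∀ A B C : Submodule ℂ H, C ⟂ A → C ⟂ B →
      (le A B ↔ le (A ⊔ C) (B ⊔ C)))
    (k : ℕ) (u : Fin k → H)
    (horth : ∀ i j, i ≠ j → inner ℂ (u i) (u j) = (0 : ℂ))
    (A : Submodule ℂ H) (hA : A = Submodule.span ℂ (Set.range u))
    (hu : ∀ i, le (Submodule.span ℂ {u i}) ⊥ ∧ le ⊥ (Submodule.span ℂ {u i})) :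
    le A ⊥ ∧ le ⊥ A :=
  stmt8_general le hrefl htrans hdeFinetti k u horth A hA hu
end

section
/- Let μ₁, μ₂ be two quantum probability measures on a finite-dimensional Hilbert space H (given by positive semidefinite trace-one operators T₁, T₂ via μᵢ(A) = tr(Π_A Tᵢ)). Define the lexicographic order: A ⪯ B iff μ₁(A) < μ₁(B), or μ₁(A) = μ₁(B) and μ₂(A) ≤ μ₂(B). Then ⪯ satisfies de Finetti's axiom, Negation, and Monotonicity. -/
noncomputable def proj {H : Type*} [NormedAddCommGroup H] [InnerProductSpace ℂ H]
    [FiniteDimensional ℂ H] (A : Submodule ℂ H) : H →ₗ[ℂ] H :=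
  (A.subtypeL.comp A.orthogonalProjectionOnto).toLinearMap

noncomputable def mu {H : Type*} [NormedAddCommGroup H] [InnerProductSpace ℂ H]
    [FiniteDimensional ℂ H] (T : H →ₗ[ℂ] H) (A : Submodule ℂ H) : ℝ :=
  RCLike.re (LinearMap.trace ℂ H ((proj A) ∘ₗ T))

/-!
Each measure `μᵢ(A) = re tr(Π_A Tᵢ)` is additive on orthogonal sums, satisfies `μᵢ(Aᗮ) = 1 - μᵢ(A)`,
`μᵢ(⊥) = 0` and `μᵢ ≥ 0` (because `tr(Π_A T) = tr(Π_A T Π_A)` and `Π_A T Π_A` is again accretive).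
Hence `A ↦ (μ₁(A), μ₂(A))` is an additive map into the lexicographically ordered group `ℝ ×ₗ ℝ`,
and `⪯` is its pull-back; the three axioms are then translation invariance, order reversal under
`x ↦ (1, 1) - x`, and nonnegativity in that ordered group.
-/

open Submodule

namespace Submodule

variable {𝕜 E : Type*} [RCLike 𝕜] [NormedAddCommGroup E] [InnerProductSpace 𝕜 E]

theorem IsOrtho.starProjection_sup {A C : Submodule 𝕜 E} [A.HasOrthogonalProjection]
    [C.HasOrthogonalProjection] [(A ⊔ C).HasOrthogonalProjection] (h : A ⟂ C) :
    (A ⊔ C).starProjection = A.starProjection + C.starProjection := by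
  ext x
  refine eq_starProjection_of_mem_orthogonal
    (add_mem_sup (starProjection_apply_mem A x) (starProjection_apply_mem C x)) ?_
  rw [← inf_orthogonal, mem_inf]
  constructor
  · have := Aᗮ.sub_mem (sub_starProjection_mem_orthogonal (K := A) x)
      (h.symm.le (starProjection_apply_mem C x))
    simpa [sub_sub] using this
  · have := Cᗮ.sub_mem (sub_starProjection_mem_orthogonal (K := C) x)
      (h.le (starProjection_apply_mem A x))
    simpa [sub_sub, add_comm] using this

end Submodule

namespace LinearMap

variable {𝕜 E : Type*} [RCLike 𝕜] [NormedAddCommGroup E] [InnerProductSpace 𝕜 E]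
  [FiniteDimensional 𝕜 E]

theorem re_trace_nonneg {T : E →ₗ[𝕜] E} (hT : ∀ x, 0 ≤ RCLike.re (inner 𝕜 (T x) x)) :
    0 ≤ RCLike.re (trace 𝕜 E T) := by
  rw [trace_eq_sum_inner T (stdOrthonormalBasis 𝕜 E), map_sum]
  refine Finset.sum_nonneg fun i _ ↦ ?_
  rw [← inner_conj_symm, RCLike.conj_re]
  exact hT _

end LinearMap

section QuantumMeasure

variable {H : Type*} [NormedAddCommGroup H] [InnerProductSpace ℂ H] [FiniteDimensional ℂ H]

theorem proj_eq_starProjection (A : Submodule ℂ H) : proj A = A.starProjection.toLinearMap :=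
  rfl

theorem mu_sup_of_isOrtho (T : H →ₗ[ℂ] H) {A C : Submodule ℂ H} (h : C ⟂ A) :
    mu T (A ⊔ C) = mu T A + mu T C := by
  simp only [mu, proj_eq_starProjection, h.symm.starProjection_sup,
    ContinuousLinearMap.toLinearMap_add, LinearMap.add_comp, map_add]

theorem mu_top {T : H →ₗ[ℂ] H} (htr : LinearMap.trace ℂ H T = 1) : mu T ⊤ = 1 := by
  simp [mu, proj_eq_starProjection, starProjection_top, htr]

theorem mu_bot (T : H →ₗ[ℂ] H) : mu T ⊥ = 0 := by
  simp [mu, proj_eq_starProjection, starProjection_bot]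

theorem mu_orthogonal {T : H →ₗ[ℂ] H} (htr : LinearMap.trace ℂ H T = 1) (A : Submodule ℂ H) :
    mu T Aᗮ = 1 - mu T A := by
  have h := mu_sup_of_isOrtho T (isOrtho_orthogonal_left A)
  rw [sup_orthogonal_of_hasOrthogonalProjection, mu_top htr] at h
  linarith

theorem mu_eq_re_trace_conj (T : H →ₗ[ℂ] H) (A : Submodule ℂ H) :
    mu T A = RCLike.re (LinearMap.trace ℂ H (proj A ∘ₗ T ∘ₗ proj A)) := by
  have hidem : proj A ∘ₗ proj A = proj A :=
    congrArg ContinuousLinearMap.toLinearMap A.isIdempotentElem_starProjection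
  rw [mu, LinearMap.trace_comp_comm' (T ∘ₗ proj A), LinearMap.comp_assoc, hidem,
    LinearMap.trace_comp_comm']

theorem mu_nonneg {T : H →ₗ[ℂ] H} (hpos : ∀ x, 0 ≤ RCLike.re (inner ℂ (T x) x))
    (A : Submodule ℂ H) : 0 ≤ mu T A := by
  rw [mu_eq_re_trace_conj]
  refine LinearMap.re_trace_nonneg fun x ↦ ?_
  rw [LinearMap.comp_apply, proj_eq_starProjection, A.starProjection_isSymmetric]
  exact hpos _

noncomputable def muLex (T₁ T₂ : H →ₗ[ℂ] H) (A : Submodule ℂ H) : ℝ ×ₗ ℝ :=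
  toLex (mu T₁ A, mu T₂ A)

variable {T₁ T₂ : H →ₗ[ℂ] H}

theorem muLex_le_muLex_iff {A B : Submodule ℂ H} :
    muLex T₁ T₂ A ≤ muLex T₁ T₂ B ↔
      mu T₁ A < mu T₁ B ∨ (mu T₁ A = mu T₁ B ∧ mu T₂ A ≤ mu T₂ B) :=
  Prod.Lex.toLex_le_toLex

theorem muLex_sup_of_isOrtho {A C : Submodule ℂ H} (h : C ⟂ A) :
    muLex T₁ T₂ (A ⊔ C) = muLex T₁ T₂ A + muLex T₁ T₂ C := by
  simp only [muLex, mu_sup_of_isOrtho _ h, ← toLex_add, Prod.mk_add_mk]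

theorem muLex_orthogonal (htr₁ : LinearMap.trace ℂ H T₁ = 1) (htr₂ : LinearMap.trace ℂ H T₂ = 1)
    (A : Submodule ℂ H) : muLex T₁ T₂ Aᗮ = toLex (1, 1) - muLex T₁ T₂ A := by
  simp only [muLex, mu_orthogonal htr₁, mu_orthogonal htr₂, ← toLex_sub, Prod.mk_sub_mk]

theorem muLex_bot : muLex T₁ T₂ (⊥ : Submodule ℂ H) = 0 := by
  simp only [muLex, mu_bot]
  rfl

theorem muLex_nonneg (hpos₁ : ∀ x, 0 ≤ RCLike.re (inner ℂ (T₁ x) x))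
    (hpos₂ : ∀ x, 0 ≤ RCLike.re (inner ℂ (T₂ x) x)) (A : Submodule ℂ H) :
    0 ≤ muLex T₁ T₂ A :=
  Prod.Lex.toLex_mono (show ((0 : ℝ), (0 : ℝ)) ≤ _ from ⟨mu_nonneg hpos₁ A, mu_nonneg hpos₂ A⟩)

end QuantumMeasure

theorem stmt9_general {H : Type*} [NormedAddCommGroup H] [InnerProductSpace ℂ H]
    [FiniteDimensional ℂ H] (T₁ T₂ : H →ₗ[ℂ] H)
    (hpos₁ : ∀ x : H, 0 ≤ RCLike.re (inner ℂ (T₁ x) x : ℂ))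
    (hpos₂ : ∀ x : H, 0 ≤ RCLike.re (inner ℂ (T₂ x) x : ℂ))
    (htr₁ : LinearMap.trace ℂ H T₁ = 1) (htr₂ : LinearMap.trace ℂ H T₂ = 1)
    (le : Submodule ℂ H → Submodule ℂ H → Prop)
    (hle : ∀ A B, le A B ↔
      (mu T₁ A < mu T₁ B ∨ (mu T₁ A = mu T₁ B ∧ mu T₂ A ≤ mu T₂ B))) :
    (∀ A B C : Submodule ℂ H, C ⟂ A → C ⟂ B →
      (le A B ↔ le (A ⊔ C) (B ⊔ C))) ∧
    (∀ A B : Submodule ℂ H, le A B → le Bᗮ Aᗮ) ∧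
    (∀ A : Submodule ℂ H, le ⊥ A) := by
  have hlex : ∀ A B, le A B ↔ muLex T₁ T₂ A ≤ muLex T₁ T₂ B := fun A B ↦
    (hle A B).trans muLex_le_muLex_iff.symm
  refine ⟨fun A B C hCA hCB ↦ ?_, fun A B hAB ↦ ?_, fun A ↦ ?_⟩
  · rw [hlex, hlex, muLex_sup_of_isOrtho hCA, muLex_sup_of_isOrtho hCB, add_le_add_iff_right]
  · rw [hlex, muLex_orthogonal htr₁ htr₂, muLex_orthogonal htr₁ htr₂]
    exact sub_le_sub_left ((hlex A B).1 hAB) _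
  · rw [hlex, muLex_bot]
    exact muLex_nonneg hpos₁ hpos₂ A

/-- the lexicographic order induced by two quantum probability
measures satisfies de Finetti's axiom, Negation, and Monotonicity. -/
theorem stmt9 {H : Type*} [NormedAddCommGroup H] [InnerProductSpace ℂ H]
    [FiniteDimensional ℂ H] (T₁ T₂ : H →ₗ[ℂ] H)
    (hsym₁ : T₁.IsSymmetric) (hsym₂ : T₂.IsSymmetric)
    (hpos₁ : ∀ x : H, 0 ≤ RCLike.re (inner ℂ (T₁ x) x : ℂ))
    (hpos₂ : ∀ x : H, 0 ≤ RCLike.re (inner ℂ (T₂ x) x : ℂ))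
    (htr₁ : LinearMap.trace ℂ H T₁ = 1) (htr₂ : LinearMap.trace ℂ H T₂ = 1)
    (le : Submodule ℂ H → Submodule ℂ H → Prop)
    (hle : ∀ A B, le A B ↔
      (mu T₁ A < mu T₁ B ∨ (mu T₁ A = mu T₁ B ∧ mu T₂ A ≤ mu T₂ B))) :
    (∀ A B C : Submodule ℂ H, C ⟂ A → C ⟂ B →
      (le A B ↔ le (A ⊔ C) (B ⊔ C))) ∧
    (∀ A B : Submodule ℂ H, le A B → le Bᗮ Aᗮ) ∧
    (∀ A : Submodule ℂ H, le ⊥ A) :=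
  stmt9_general T₁ T₂ hpos₁ hpos₂ htr₁ htr₂ le hle
end

section
/- Let H be a finite-dimensional Hilbert space with dim H = n ≥ 1, and ⪯ a weak order on subspaces satisfying de Finetti's axiom. Suppose all one-dimensional subspaces are ⪯-equivalent. Then any two subspaces of the same dimension are ⪯-equivalent. -/
/-!
Call subspaces `A`, `B` of the same dimension adjacent if they meet in a hyperplane `D` of each.
Then `A = D ⊔ u` and `B = D ⊔ v` for the lines `u = Dᗮ ⊓ A`, `v = Dᗮ ⊓ B`, which are
orthogonal to `D`; so `u ⪯ v` gives `A ⪯ B` by de Finetti's axiom. Any two subspaces of the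
same dimension are joined by a chain of adjacent ones: adjoining a vector of `B \ A` to a
hyperplane of `A` through `A ⊓ B` gives a subspace adjacent to `A` that meets `B` in one more
dimension.
-/

open Module

namespace Submodule

section DivisionRing

variable {K V : Type*} [DivisionRing K] [AddCommGroup V] [Module K V]

def IsAdjacent (A B : Submodule K V) : Prop :=
  finrank K A = finrank K B ∧ finrank K ↥(A ⊓ B) + 1 = finrank K A

variable [FiniteDimensional K V]

lemma finrank_eq_add_one_of_covBy {E A : Submodule K V} (h : E ⋖ A) :
    finrank K A = finrank K E + 1 := by
  obtain ⟨y, hyA, hyE⟩ := SetLike.exists_of_lt h.lt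
  have hA : E ⊔ span K {y} = A :=
    (h.eq_or_eq le_sup_left (sup_le h.le ((span_singleton_le_iff_mem _ _).mpr hyA))).resolve_left
      fun hE ↦ hyE (hE ▸ mem_sup_right (mem_span_singleton_self y))
  rw [← hA, finrank_sup_span_singleton hyE]

lemma exists_isAdjacent_finrank_inf_lt {A B : Submodule K V}
    (hAB : finrank K A = finrank K B) (hne : A ≠ B) :
    ∃ A', IsAdjacent A A' ∧ finrank K ↥(A ⊓ B) < finrank K ↥(A' ⊓ B) := by
  have hBA : ¬ B ≤ A := fun h ↦ hne (eq_of_le_of_finrank_eq h hAB.symm).symm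
  obtain ⟨x, hxB, hxA⟩ := SetLike.not_le_iff_exists.mp hBA
  have hDA : A ⊓ B < A :=
    inf_le_left.lt_of_ne fun h ↦ hne (eq_of_le_of_finrank_eq (inf_eq_left.mp h) hAB)
  obtain ⟨E, hDE, hEA⟩ := exists_le_covBy_of_lt hDA
  have hxE : x ∉ E := fun h ↦ hxA (hEA.le h)
  have hAA' : A ⊓ (E ⊔ span K {x}) = E := by
    rw [inf_comm, sup_inf_assoc_of_le _ hEA.le,
      (disjoint_span_singleton_of_notMem hxA).symm.eq_bot, sup_bot_eq]
  refine ⟨E ⊔ span K {x}, ⟨?_, ?_⟩, ?_⟩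
  · rw [finrank_sup_span_singleton hxE, finrank_eq_add_one_of_covBy hEA]
  · rw [hAA', finrank_eq_add_one_of_covBy hEA]
  · calc finrank K ↥(A ⊓ B) < finrank K ↥(A ⊓ B ⊔ span K {x}) := by
          rw [finrank_sup_span_singleton fun h ↦ hxA (mem_inf.mp h).1]; omega
      _ ≤ finrank K ↥((E ⊔ span K {x}) ⊓ B) :=
          finrank_mono (sup_le (le_inf (hDE.trans le_sup_left) inf_le_right)
            (le_inf le_sup_right ((span_singleton_le_iff_mem _ _).mpr hxB)))

theorem reflTransGen_isAdjacent_of_finrank_eq {A B : Submodule K V}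
    (hAB : finrank K A = finrank K B) : Relation.ReflTransGen IsAdjacent A B := by
  by_cases hne : A = B
  · exact hne ▸ .refl
  obtain ⟨A', hadj, hlt⟩ := exists_isAdjacent_finrank_inf_lt hAB hne
  have hA' : finrank K A = finrank K A' := hadj.1
  have hA'B : finrank K ↥(A' ⊓ B) ≤ finrank K A' := finrank_mono inf_le_left
  exact .head hadj (reflTransGen_isAdjacent_of_finrank_eq (hA'.symm.trans hAB))
termination_by finrank K A - finrank K ↥(A ⊓ B)
decreasing_by omega

end DivisionRing

variable {𝕜 H : Type*} [RCLike 𝕜] [NormedAddCommGroup H] [InnerProductSpace 𝕜 H]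
  [FiniteDimensional 𝕜 H]

lemma le_of_isAdjacent (le : Submodule 𝕜 H → Submodule 𝕜 H → Prop)
    (hdeFinetti : ∀ A B C : Submodule 𝕜 H, C ⟂ A → C ⟂ B →
      (le A B ↔ le (A ⊔ C) (B ⊔ C)))
    (hlines : ∀ u v : Submodule 𝕜 H, finrank 𝕜 u = 1 → finrank 𝕜 v = 1 → le u v)
    {A B : Submodule 𝕜 H} (hAB : IsAdjacent A B) : le A B := by
  obtain ⟨hfin, hinf⟩ := hAB
  set D := A ⊓ B
  have hDA : D ≤ A := inf_le_left
  have hDB : D ≤ B := inf_le_right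
  have hu : finrank 𝕜 ↥(Dᗮ ⊓ A) = 1 := by
    have := finrank_add_inf_finrank_orthogonal hDA; omega
  have hv : finrank 𝕜 ↥(Dᗮ ⊓ B) = 1 := by
    have := finrank_add_inf_finrank_orthogonal hDB; omega
  have h := (hdeFinetti _ _ D ((isOrtho_orthogonal_right D).mono_right inf_le_left)
    ((isOrtho_orthogonal_right D).mono_right inf_le_left)).mp (hlines _ _ hu hv)
  rwa [sup_comm _ D, sup_comm _ D, sup_orthogonal_inf_of_hasOrthogonalProjection hDA,
    sup_orthogonal_inf_of_hasOrthogonalProjection hDB] at h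

end Submodule

theorem stmt10_general {H : Type*} [NormedAddCommGroup H] [InnerProductSpace ℂ H]
    [FiniteDimensional ℂ H]
    (le : Submodule ℂ H → Submodule ℂ H → Prop)
    (hrefl : ∀ A, le A A)
    (htrans : ∀ A B C, le A B → le B C → le A C)
    (hdeFinetti : ∀ A B C : Submodule ℂ H, C ⟂ A → C ⟂ B →
      (le A B ↔ le (A ⊔ C) (B ⊔ C)))
    (hlines : ∀ u v : Submodule ℂ H,
      Module.finrank ℂ u = 1 → Module.finrank ℂ v = 1 → le u v) :
    ∀ A B : Submodule ℂ H,
      Module.finrank ℂ A = Module.finrank ℂ B → le A B ∧ le B A := by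
  have hchain {A B : Submodule ℂ H} (h : Relation.ReflTransGen Submodule.IsAdjacent A B) :
      le A B := by
    induction h with
    | refl => exact hrefl A
    | tail _ hadj ih =>
      exact htrans _ _ _ ih (Submodule.le_of_isAdjacent le hdeFinetti hlines hadj)
  intro A B hAB
  exact ⟨hchain (Submodule.reflTransGen_isAdjacent_of_finrank_eq hAB),
    hchain (Submodule.reflTransGen_isAdjacent_of_finrank_eq hAB.symm)⟩

/-- under de Finetti's axiom, if all lines are equivalent, then
any two subspaces of the same dimension are equivalent. -/
theorem stmt10 {H : Type*} [NormedAddCommGroup H] [InnerProductSpace ℂ H]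
    [FiniteDimensional ℂ H] (hdim : 1 ≤ Module.finrank ℂ H)
    (le : Submodule ℂ H → Submodule ℂ H → Prop)
    (hrefl : ∀ A, le A A)
    (htrans : ∀ A B C, le A B → le B C → le A C)
    (htotal : ∀ A B, le A B ∨ le B A)
    (hdeFinetti : ∀ A B C : Submodule ℂ H, C ⟂ A → C ⟂ B →
      (le A B ↔ le (A ⊔ C) (B ⊔ C)))
    (hlines : ∀ u v : Submodule ℂ H,
      Module.finrank ℂ u = 1 → Module.finrank ℂ v = 1 → le u v) :
    ∀ A B : Submodule ℂ H,
      Module.finrank ℂ A = Module.finrank ℂ B → le A B ∧ le B A :=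
  stmt10_general le hrefl htrans hdeFinetti hlines
end

section
/- Let H be a finite-dimensional Hilbert space, dim H = n, and ⪯ a weak order on subspaces satisfying de Finetti's axiom such that all one-dimensional subspaces are equivalent to a fixed line m, and {0} ≺ m. Then for subspaces A, B: A ⪯ B iff dim A ≤ dim B; in particular ⪯ is represented by the uniform measure μ(A) = dim A / dim H. -/
/-!
Two subspaces of the same dimension `k + 1` can be written as `a ⊔ D` and `c ⊔ B'` with lines
`a ⟂ D`, `c ⟂ D` and `c ⟂ B'` (a line `c` of `B` orthogonal to `D` exists by counting dimensions).
De Finetti's axiom lets us exchange the line `a` for `c`, and then `D` for `B'` by induction on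
`k`, so the two subspaces are equivalent. Adding an orthogonal line `ℓ` moves a subspace strictly
up, since `{0} ≺ ℓ`; hence `⪯` compares dimensions.
-/

open Module Submodule

def IsDeFinetti {𝕜 E : Type*} [RCLike 𝕜] [NormedAddCommGroup E] [InnerProductSpace 𝕜 E]
    (r : Submodule 𝕜 E → Submodule 𝕜 E → Prop) : Prop :=
  ∀ A B C : Submodule 𝕜 E, C ⟂ A → C ⟂ B → (r A B ↔ r (A ⊔ C) (B ⊔ C))

section Geometry

variable {𝕜 E : Type*} [RCLike 𝕜] [NormedAddCommGroup E] [InnerProductSpace 𝕜 E]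

theorem Submodule.exists_le_finrank_eq_one {B : Submodule 𝕜 E} (hB : B ≠ ⊥) :
    ∃ ℓ ≤ B, finrank 𝕜 ℓ = 1 := by
  obtain ⟨v, hvB, hv⟩ := exists_mem_ne_zero_of_ne_bot hB
  exact ⟨𝕜 ∙ v, (span_singleton_le_iff_mem v B).mpr hvB, finrank_span_singleton hv⟩

variable [FiniteDimensional 𝕜 E]

theorem Submodule.exists_isOrtho_sup_eq {K B : Submodule 𝕜 E} (h : K ≤ B) :
    ∃ D : Submodule 𝕜 E, finrank 𝕜 K + finrank 𝕜 D = finrank 𝕜 B ∧ K ⟂ D ∧ K ⊔ D = B :=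
  ⟨Kᗮ ⊓ B, finrank_add_inf_finrank_orthogonal h, (isOrtho_iff_le.mpr inf_le_left).symm,
    sup_orthogonal_inf_of_hasOrthogonalProjection h⟩

theorem Submodule.exists_finrank_eq_one_isOrtho_sup_eq {B : Submodule 𝕜 E} {k : ℕ}
    (hB : finrank 𝕜 B = k + 1) :
    ∃ ℓ D : Submodule 𝕜 E, finrank 𝕜 ℓ = 1 ∧ finrank 𝕜 D = k ∧ ℓ ⟂ D ∧ ℓ ⊔ D = B := by
  obtain ⟨ℓ, hℓB, hℓ⟩ := exists_le_finrank_eq_one (B := B) (by rintro rfl; simp at hB)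
  obtain ⟨D, hdim, hℓD, rfl⟩ := exists_isOrtho_sup_eq hℓB
  exact ⟨ℓ, D, hℓ, by omega, hℓD, rfl⟩

theorem Submodule.exists_le_finrank_eq_one_isOrtho {B D : Submodule 𝕜 E}
    (h : finrank 𝕜 D < finrank 𝕜 B) : ∃ c ≤ B, finrank 𝕜 c = 1 ∧ c ⟂ D := by
  have hne : Dᗮ ⊓ B ≠ ⊥ := fun hbot => by
    have := finrank_add_finrank_le_of_disjoint (disjoint_iff.mpr hbot)
    have := finrank_add_finrank_orthogonal D
    omega
  obtain ⟨c, hc, hc1⟩ := exists_le_finrank_eq_one hne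
  exact ⟨c, hc.trans inf_le_right, hc1, isOrtho_iff_le.mpr (hc.trans inf_le_left)⟩

end Geometry

namespace IsDeFinetti

variable {𝕜 E : Type*} [RCLike 𝕜] [NormedAddCommGroup E] [InnerProductSpace 𝕜 E]
  {r : Submodule 𝕜 E → Submodule 𝕜 E → Prop}

theorem le_sup_iff (hdF : IsDeFinetti r) {C D : Submodule 𝕜 E} (h : C ⟂ D) :
    r D (C ⊔ D) ↔ r ⊥ C := by
  simpa using (hdF ⊥ C D isOrtho_bot_right h.symm).symm

theorem sup_le_iff (hdF : IsDeFinetti r) {C D : Submodule 𝕜 E} (h : C ⟂ D) :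
    r (C ⊔ D) D ↔ r C ⊥ := by
  simpa using (hdF C ⊥ D h.symm isOrtho_bot_right).symm

variable [FiniteDimensional 𝕜 E]

theorem le_of_finrank_eq (hdF : IsDeFinetti r) (hrefl : ∀ A, r A A)
    (htrans : ∀ A B C, r A B → r B C → r A C)
    (hline : ∀ a c : Submodule 𝕜 E, finrank 𝕜 a = 1 → finrank 𝕜 c = 1 → r a c)
    {A B : Submodule 𝕜 E} (h : finrank 𝕜 A = finrank 𝕜 B) : r A B := by
  obtain ⟨k, hk⟩ : ∃ k, finrank 𝕜 A = k := ⟨_, rfl⟩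
  induction k generalizing A B with
  | zero =>
    have hB : finrank 𝕜 B = 0 := h ▸ hk
    rw [finrank_eq_zero.mp hk, finrank_eq_zero.mp hB]
    exact hrefl ⊥
  | succ k ih =>
    obtain ⟨a, D, ha, hD, haD, rfl⟩ := exists_finrank_eq_one_isOrtho_sup_eq hk
    obtain ⟨c, hcB, hc, hcD⟩ := exists_le_finrank_eq_one_isOrtho (D := D) (B := B) (by omega)
    obtain ⟨B', hdim, hcB', rfl⟩ := exists_isOrtho_sup_eq hcB
    have exchange_line : r (a ⊔ D) (c ⊔ D) :=
      (hdF a c D haD.symm hcD.symm).mp (hline a c ha hc)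
    have exchange_complement : r (D ⊔ c) (B' ⊔ c) :=
      (hdF D B' c hcD hcB').mp (ih (by omega) hD)
    rw [sup_comm D, sup_comm B'] at exchange_complement
    exact htrans _ _ _ exchange_line exchange_complement

theorem le_of_finrank_le (hdF : IsDeFinetti r) (hrefl : ∀ A, r A A)
    (htrans : ∀ A B C, r A B → r B C → r A C)
    (hline : ∀ a c : Submodule 𝕜 E, finrank 𝕜 a = 1 → finrank 𝕜 c = 1 → r a c)
    (hbot : ∀ ℓ : Submodule 𝕜 E, finrank 𝕜 ℓ = 1 → r ⊥ ℓ)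
    {A B : Submodule 𝕜 E} (h : finrank 𝕜 A ≤ finrank 𝕜 B) : r A B := by
  obtain ⟨d, hd⟩ := Nat.exists_eq_add_of_le h
  induction d generalizing B with
  | zero => exact hdF.le_of_finrank_eq hrefl htrans hline hd.symm
  | succ d ih =>
    obtain ⟨ℓ, B', hℓ, hB', hℓB', rfl⟩ :=
      exists_finrank_eq_one_isOrtho_sup_eq (k := finrank 𝕜 A + d) hd
    exact htrans _ _ _ (ih (by omega) hB') ((hdF.le_sup_iff hℓB').mpr (hbot ℓ hℓ))

theorem not_le_of_finrank_lt (hdF : IsDeFinetti r) (hrefl : ∀ A, r A A)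
    (htrans : ∀ A B C, r A B → r B C → r A C)
    (hline : ∀ a c : Submodule 𝕜 E, finrank 𝕜 a = 1 → finrank 𝕜 c = 1 → r a c)
    (hbot : ∀ ℓ : Submodule 𝕜 E, finrank 𝕜 ℓ = 1 → r ⊥ ℓ)
    (hbot_strict : ∀ ℓ : Submodule 𝕜 E, finrank 𝕜 ℓ = 1 → ¬ r ℓ ⊥)
    {A B : Submodule 𝕜 E} (h : finrank 𝕜 A < finrank 𝕜 B) : ¬ r B A := by
  obtain ⟨k, hk⟩ := Nat.exists_eq_add_of_lt h
  obtain ⟨ℓ, B', hℓ, hB', hℓB', rfl⟩ := exists_finrank_eq_one_isOrtho_sup_eq hk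
  have hAB' : r A B' := hdF.le_of_finrank_le hrefl htrans hline hbot (by omega)
  exact fun hBA => hbot_strict ℓ hℓ ((hdF.sup_le_iff hℓB').mp (htrans _ _ _ hBA hAB'))

theorem iff_finrank_le (hdF : IsDeFinetti r) (hrefl : ∀ A, r A A)
    (htrans : ∀ A B C, r A B → r B C → r A C)
    (hline : ∀ a c : Submodule 𝕜 E, finrank 𝕜 a = 1 → finrank 𝕜 c = 1 → r a c)
    (hbot : ∀ ℓ : Submodule 𝕜 E, finrank 𝕜 ℓ = 1 → r ⊥ ℓ)
    (hbot_strict : ∀ ℓ : Submodule 𝕜 E, finrank 𝕜 ℓ = 1 → ¬ r ℓ ⊥)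
    (A B : Submodule 𝕜 E) : r A B ↔ finrank 𝕜 A ≤ finrank 𝕜 B :=
  ⟨fun hAB => not_lt.mp fun hlt =>
      hdF.not_le_of_finrank_lt hrefl htrans hline hbot hbot_strict hlt hAB,
    hdF.le_of_finrank_le hrefl htrans hline hbot⟩

end IsDeFinetti

theorem stmt11_general {H : Type*} [NormedAddCommGroup H] [InnerProductSpace ℂ H]
    [FiniteDimensional ℂ H]
    (le : Submodule ℂ H → Submodule ℂ H → Prop)
    (hrefl : ∀ A, le A A)
    (htrans : ∀ A B C, le A B → le B C → le A C)
    (hdeFinetti : ∀ A B C : Submodule ℂ H, C ⟂ A → C ⟂ B →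
      (le A B ↔ le (A ⊔ C) (B ⊔ C)))
    (m : Submodule ℂ H)
    (hlines : ∀ v : Submodule ℂ H, Module.finrank ℂ v = 1 → le v m ∧ le m v)
    (hstrict : le ⊥ m ∧ ¬ le m ⊥) :
    ∀ A B : Submodule ℂ H,
      le A B ↔ (Module.finrank ℂ A : ℝ) / (Module.finrank ℂ H : ℝ)
        ≤ (Module.finrank ℂ B : ℝ) / (Module.finrank ℂ H : ℝ) := by
  intro A B
  have hdF : IsDeFinetti le := hdeFinetti
  have hm : m ≠ ⊥ := by
    rintro rfl
    exact hstrict.2 hstrict.1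
  have hH : (0 : ℝ) < finrank ℂ H := by
    exact_mod_cast (Nat.pos_of_ne_zero (mt finrank_eq_zero.mp hm)).trans_le (finrank_le m)
  rw [div_le_div_iff_of_pos_right hH, Nat.cast_le]
  exact hdF.iff_finrank_le hrefl htrans
    (fun a c ha hc => htrans _ _ _ (hlines a ha).1 (hlines c hc).2)
    (fun ℓ hℓ => htrans _ _ _ hstrict.1 (hlines ℓ hℓ).2)
    (fun ℓ hℓ hℓ0 => hstrict.2 (htrans _ _ _ (hlines ℓ hℓ).2 hℓ0)) A B

/-- if all lines are equivalent to a fixed line m with {0} ≺ m,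
then the order is represented by the uniform measure μ(A) = dim A / dim H. -/
theorem stmt11 {H : Type*} [NormedAddCommGroup H] [InnerProductSpace ℂ H]
    [FiniteDimensional ℂ H]
    (le : Submodule ℂ H → Submodule ℂ H → Prop)
    (hrefl : ∀ A, le A A)
    (htrans : ∀ A B C, le A B → le B C → le A C)
    (htotal : ∀ A B, le A B ∨ le B A)
    (hdeFinetti : ∀ A B C : Submodule ℂ H, C ⟂ A → C ⟂ B →
      (le A B ↔ le (A ⊔ C) (B ⊔ C)))
    (m : Submodule ℂ H) (hm : Module.finrank ℂ m = 1)
    (hlines : ∀ v : Submodule ℂ H, Module.finrank ℂ v = 1 → le v m ∧ le m v)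
    (hstrict : le ⊥ m ∧ ¬ le m ⊥) :
    ∀ A B : Submodule ℂ H,
      le A B ↔ (Module.finrank ℂ A : ℝ) / (Module.finrank ℂ H : ℝ)
        ≤ (Module.finrank ℂ B : ℝ) / (Module.finrank ℂ H : ℝ) :=
  stmt11_general le hrefl htrans hdeFinetti m hlines hstrict
end

section
/- Let H be a finite-dimensional Hilbert space, p a unit vector, E = (span p)^⊥, and ⪯ a weak order on subspaces satisfying the standard assumptions with span{p} ∼ H. Then for any subspace A: A ∼ A₁, where A₁ is the span of the orthogonal projection Π_A(p) of p onto A (with A₁ = {0} if Π_A(p) = 0). -/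
/-!
Negation turns `H ⪯ span{p}` into `E ⪯ {0}` for `E = (span{p})ᗮ`, and de Finetti's axiom transfers this
to every subspace `F ≤ E`: writing `E = F ⊕ C`, from `F ⊕ C ⪯ {0} ⪯ C` cancel `C`. Now
`A = A₁ ⊕ B` with `B = A₁ᗮ ⊓ A`, and `B ≤ E` because the projection is self-adjoint. So
`B ∼ {0}`, and adding `A₁` to both sides gives `A ∼ A₁`.
-/

namespace Submodule

variable {𝕜 H : Type*} [RCLike 𝕜] [NormedAddCommGroup H] [InnerProductSpace 𝕜 H]

theorem inf_orthogonal_span_orthogonalProjectionOnto_le (A : Submodule 𝕜 H)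
    [A.HasOrthogonalProjection] (p : H) :
    (𝕜 ∙ (A.orthogonalProjectionOnto p : H))ᗮ ⊓ A ≤ (𝕜 ∙ p)ᗮ := by
  intro x hx
  obtain ⟨hxq, hxA⟩ := mem_inf.mp hx
  rw [mem_orthogonal_singleton_iff_inner_right] at hxq ⊢
  rwa [← starProjection_eq_self_iff.mpr hxA, ← inner_starProjection_left_eq_right]

section Comparison

variable {le : Submodule 𝕜 H → Submodule 𝕜 H → Prop}

theorem le_bot_of_le_of_le_bot (htrans : ∀ A B C, le A B → le B C → le A C)
    (hdeFinetti : ∀ A B C : Submodule 𝕜 H, C ⟂ A → C ⟂ B → (le A B ↔ le (A ⊔ C) (B ⊔ C)))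
    (hmono : ∀ A : Submodule 𝕜 H, le ⊥ A) {E F : Submodule 𝕜 H} [F.HasOrthogonalProjection]
    (hFE : F ≤ E) (hE : le E ⊥) : le F ⊥ := by
  have hC : Fᗮ ⊓ E ⟂ F := (isOrtho_orthogonal_left F).mono_left inf_le_left
  rw [hdeFinetti F ⊥ _ hC isOrtho_bot_right, sup_orthogonal_inf_of_hasOrthogonalProjection hFE,
    bot_sup_eq]
  exact htrans _ _ _ hE (hmono _)

theorem le_and_le_of_inf_orthogonal_le_bot
    (hdeFinetti : ∀ A B C : Submodule 𝕜 H, C ⟂ A → C ⟂ B → (le A B ↔ le (A ⊔ C) (B ⊔ C)))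
    (hmono : ∀ A : Submodule 𝕜 H, le ⊥ A) {A A₁ : Submodule 𝕜 H} [A₁.HasOrthogonalProjection]
    (hA₁ : A₁ ≤ A) (hB : le (A₁ᗮ ⊓ A) ⊥) : le A A₁ ∧ le A₁ A := by
  have hdecomp : A₁ᗮ ⊓ A ⊔ A₁ = A := by
    rw [sup_comm, sup_orthogonal_inf_of_hasOrthogonalProjection hA₁]
  have hortho : A₁ ⟂ A₁ᗮ ⊓ A := (isOrtho_orthogonal_right A₁).mono_right inf_le_left
  constructor
  · simpa [hdecomp] using (hdeFinetti _ ⊥ A₁ hortho isOrtho_bot_right).mp hB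
  · simpa [hdecomp] using (hdeFinetti ⊥ _ A₁ isOrtho_bot_right hortho).mp (hmono _)

end Comparison

end Submodule

open Submodule in
theorem stmt15_general {H : Type*} [NormedAddCommGroup H] [InnerProductSpace ℝ H]
    [FiniteDimensional ℝ H] (p : H)
    (le : Submodule ℝ H → Submodule ℝ H → Prop)
    (htrans : ∀ A B C, le A B → le B C → le A C)
    (hdeFinetti : ∀ A B C : Submodule ℝ H, C ⟂ A → C ⟂ B →
      (le A B ↔ le (A ⊔ C) (B ⊔ C)))
    (hneg : ∀ A B : Submodule ℝ H, le A B → le Bᗮ Aᗮ)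
    (hmono : ∀ A : Submodule ℝ H, le ⊥ A)
    (hpH : le (Submodule.span ℝ {p}) ⊤ ∧ le ⊤ (Submodule.span ℝ {p})) :
    ∀ A : Submodule ℝ H,
      le A (Submodule.span ℝ {(Submodule.orthogonalProjectionOnto A p : H)}) ∧
      le (Submodule.span ℝ {(Submodule.orthogonalProjectionOnto A p : H)}) A := by
  intro A
  have hE : le (ℝ ∙ p)ᗮ ⊥ := by simpa using hneg _ _ hpH.2
  have hB := le_bot_of_le_of_le_bot htrans hdeFinetti hmono
    (A.inf_orthogonal_span_orthogonalProjectionOnto_le p) hE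
  exact le_and_le_of_inf_orthogonal_le_bot hdeFinetti hmono
    ((span_singleton_le_iff_mem _ _).mpr (coe_mem _)) hB

/-- under the standard assumptions, if span{p} ∼ H then every
subspace A is equivalent to the span of the projection of p onto A. -/
theorem stmt15 {H : Type*} [NormedAddCommGroup H] [InnerProductSpace ℝ H]
    [FiniteDimensional ℝ H] (p : H) (hp : ‖p‖ = 1)
    (le : Submodule ℝ H → Submodule ℝ H → Prop)
    (hrefl : ∀ A, le A A)
    (htrans : ∀ A B C, le A B → le B C → le A C)
    (htotal : ∀ A B, le A B ∨ le B A)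
    (hdeFinetti : ∀ A B C : Submodule ℝ H, C ⟂ A → C ⟂ B →
      (le A B ↔ le (A ⊔ C) (B ⊔ C)))
    (hneg : ∀ A B : Submodule ℝ H, le A B → le Bᗮ Aᗮ)
    (hmono : ∀ A : Submodule ℝ H, le ⊥ A)
    (hpH : le (Submodule.span ℝ {p}) ⊤ ∧ le ⊤ (Submodule.span ℝ {p})) :
    ∀ A : Submodule ℝ H,
      le A (Submodule.span ℝ {(Submodule.orthogonalProjectionOnto A p : H)}) ∧
      le (Submodule.span ℝ {(Submodule.orthogonalProjectionOnto A p : H)}) A :=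
  stmt15_general p le htrans hdeFinetti hneg hmono hpH
end

section
/- Let ⪯ be a weak order on subspaces of ℝ³ satisfying the standard assumptions, whose restriction to one-dimensional subspaces is continuous (the strict lower and upper contour sets of each line are open in the unit sphere). Let m be a ⪯-minimal line and M a ⪯-maximal line among one-dimensional subspaces, with m ≺ M. Suppose unit vectors u, v satisfy span u ∼ m and span v ∼ M, u ≠ ±v, and let u', v' be unit vectors in span{u,v} with u' ⊥ u, v' ⊥ v. Then span u' ∼ M and span v' ∼ m. -/
/-! Inside the plane `P = span {u, v}`, adding `Pᗮ` (de Finetti) and then taking orthogonal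
complements (negation) reverses `⪯` between the relative complements `Aᗮ ⊓ P`; for lines of `P`
this swaps each line with its perpendicular in `P`. From `span u ∼ m ⪯ span v'` we get
`span v ⪯ span u'`, so `span u' ∼ M`; symmetrically `span u' ⪯ M ∼ span v` gives
`span v' ⪯ span u ∼ m`. -/

open Submodule Module

theorem finrank_span_pair_le_two {K V : Type*} [DivisionRing K] [AddCommGroup V] [Module K V]
    (a b : V) : finrank K (span K {a, b}) ≤ 2 := by
  classical
  exact (finrank_span_le_card ({a, b} : Set V)).trans (by simpa using Finset.card_le_two)

section Orthogonal

variable {E : Type*} [NormedAddCommGroup E] [InnerProductSpace ℝ E]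

theorem orthogonal_span_singleton_inf_span_pair {a b : E} (ha : a ≠ 0)
    (hab : inner ℝ a b = (0 : ℝ)) :
    (span ℝ {a})ᗮ ⊓ span ℝ {a, b} = span ℝ {b} := by
  apply le_antisymm
  · rintro x ⟨hxa, hx⟩
    obtain ⟨c, d, rfl⟩ := mem_span_pair.mp hx
    have hc : c * ‖a‖ ^ 2 = 0 := by
      have := mem_orthogonal_singleton_iff_inner_right.mp hxa
      rwa [inner_add_right, real_inner_smul_right, real_inner_smul_right, hab, mul_zero,
        add_zero, real_inner_self_eq_norm_sq] at this
    rw [(mul_eq_zero.mp hc).resolve_right (by positivity), zero_smul, zero_add]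
    exact smul_mem _ _ (mem_span_singleton_self b)
  · rw [span_singleton_le_iff_mem]
    exact ⟨mem_orthogonal_singleton_iff_inner_right.mpr hab, subset_span (by simp)⟩

theorem span_pair_eq_of_inner_eq_zero {P : Submodule ℝ E} [FiniteDimensional ℝ P]
    (hP : finrank ℝ P ≤ 2) {a b : E} (ha : a ≠ 0) (hb : b ≠ 0) (hab : inner ℝ a b = (0 : ℝ))
    (haP : a ∈ P) (hbP : b ∈ P) : span ℝ {a, b} = P := by
  have hind : LinearIndependent ℝ ![a, b] := by
    refine linearIndependent_of_ne_zero_of_inner_eq_zero (by simp [Fin.forall_fin_two, ha, hb]) ?_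
    intro i j hij
    fin_cases i <;> fin_cases j <;> simp_all [real_inner_comm]
  have hrank : finrank ℝ (span ℝ {a, b}) = 2 := by
    rw [← Matrix.range_cons_cons_empty a b ![]]
    simpa using finrank_span_eq_card hind
  refine eq_of_le_of_finrank_le ?_ (hrank ▸ hP)
  rw [span_le]
  rintro x (rfl | rfl | _) <;> assumption

variable {r : Submodule ℝ E → Submodule ℝ E → Prop}

theorem rel_orthogonal_inf_of_rel
    (hdeFinetti : ∀ A B C, C ⟂ A → C ⟂ B → r A B → r (A ⊔ C) (B ⊔ C))
    (hneg : ∀ A B, r A B → r Bᗮ Aᗮ) {P A B : Submodule ℝ E} [P.HasOrthogonalProjection]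
    (hA : A ≤ P) (hB : B ≤ P) (hAB : r A B) : r (Bᗮ ⊓ P) (Aᗮ ⊓ P) := by
  have key := hneg _ _ <| hdeFinetti A B Pᗮ
    (isOrtho_iff_le.mpr (orthogonal_le hA)) (isOrtho_iff_le.mpr (orthogonal_le hB)) hAB
  rwa [← inf_orthogonal, ← inf_orthogonal, orthogonal_orthogonal] at key

theorem rel_span_of_rel_span_of_inner_eq_zero
    (hdeFinetti : ∀ A B C, C ⟂ A → C ⟂ B → r A B → r (A ⊔ C) (B ⊔ C))
    (hneg : ∀ A B, r A B → r Bᗮ Aᗮ) {P : Submodule ℝ E} [FiniteDimensional ℝ P]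
    (hP : finrank ℝ P ≤ 2) {a a' b b' : E} (ha : a ≠ 0) (ha' : a' ≠ 0) (hb : b ≠ 0)
    (hb' : b' ≠ 0) (haa' : inner ℝ a a' = (0 : ℝ)) (hbb' : inner ℝ b b' = (0 : ℝ))
    (haP : a ∈ P) (ha'P : a' ∈ P) (hbP : b ∈ P) (hb'P : b' ∈ P)
    (hab : r (span ℝ {a}) (span ℝ {b})) : r (span ℝ {b'}) (span ℝ {a'}) := by
  have hperp : ∀ {x y : E}, x ≠ 0 → y ≠ 0 → inner ℝ x y = (0 : ℝ) → x ∈ P → y ∈ P →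
      (span ℝ {x})ᗮ ⊓ P = span ℝ {y} := fun hx hy hxy hxP hyP => by
    rw [← span_pair_eq_of_inner_eq_zero hP hx hy hxy hxP hyP,
      orthogonal_span_singleton_inf_span_pair hx hxy]
  have key := rel_orthogonal_inf_of_rel hdeFinetti hneg
    ((span_singleton_le_iff_mem _ _).mpr haP) ((span_singleton_le_iff_mem _ _).mpr hbP) hab
  rwa [hperp ha ha' haa' haP ha'P, hperp hb hb' hbb' hbP hb'P] at key

end Orthogonal

theorem stmt16_general
    (le : Submodule ℝ (EuclideanSpace ℝ (Fin 3)) →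
          Submodule ℝ (EuclideanSpace ℝ (Fin 3)) → Prop)
    (htrans : ∀ A B C, le A B → le B C → le A C)
    (hdeFinetti : ∀ A B C, C ⟂ A → C ⟂ B → (le A B ↔ le (A ⊔ C) (B ⊔ C)))
    (hneg : ∀ A B, le A B → le Bᗮ Aᗮ)
    (m M : Submodule ℝ (EuclideanSpace ℝ (Fin 3)))
    (hmin : ∀ w : Submodule ℝ (EuclideanSpace ℝ (Fin 3)),
      Module.finrank ℝ w = 1 → le m w)
    (hmax : ∀ w : Submodule ℝ (EuclideanSpace ℝ (Fin 3)),
      Module.finrank ℝ w = 1 → le w M)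
    (u v u' v' : EuclideanSpace ℝ (Fin 3))
    (hu : ‖u‖ = 1) (hv : ‖v‖ = 1) (hu' : ‖u'‖ = 1) (hv' : ‖v'‖ = 1)
    (hum : le (Submodule.span ℝ {u}) m ∧ le m (Submodule.span ℝ {u}))
    (hvM : le (Submodule.span ℝ {v}) M ∧ le M (Submodule.span ℝ {v}))
    (hu'mem : u' ∈ Submodule.span ℝ {u, v}) (hv'mem : v' ∈ Submodule.span ℝ {u, v})
    (hu'u : inner ℝ u' u = (0 : ℝ)) (hv'v : inner ℝ v' v = (0 : ℝ)) :
    (le (Submodule.span ℝ {u'}) M ∧ le M (Submodule.span ℝ {u'})) ∧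
    (le (Submodule.span ℝ {v'}) m ∧ le m (Submodule.span ℝ {v'})) := by
  have ne_zero {x : EuclideanSpace ℝ (Fin 3)} (hx : ‖x‖ = 1) : x ≠ 0 :=
    norm_ne_zero_iff.mp (by simp [hx])
  have hP := finrank_span_pair_le_two (K := ℝ) u v
  have huP : u ∈ span ℝ {u, v} := subset_span (by simp)
  have hvP : v ∈ span ℝ {u, v} := subset_span (by simp)
  have hdeFinetti' := fun A B C hA hB => (hdeFinetti A B C hA hB).1
  have hu'M : le (span ℝ {u'}) M := hmax _ (finrank_span_singleton (ne_zero hu'))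
  have hv'm : le m (span ℝ {v'}) := hmin _ (finrank_span_singleton (ne_zero hv'))
  have hvu' : le (span ℝ {v}) (span ℝ {u'}) :=
    rel_span_of_rel_span_of_inner_eq_zero hdeFinetti' hneg hP (ne_zero hu) (ne_zero hu')
      (ne_zero hv') (ne_zero hv) (by rwa [real_inner_comm]) hv'v huP hu'mem hv'mem hvP
      (htrans _ _ _ hum.1 hv'm)
  have hv'u : le (span ℝ {v'}) (span ℝ {u}) :=
    rel_span_of_rel_span_of_inner_eq_zero hdeFinetti' hneg hP (ne_zero hu') (ne_zero hu)
      (ne_zero hv) (ne_zero hv') hu'u (by rwa [real_inner_comm]) hu'mem huP hvP hv'mem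
      (htrans _ _ _ hu'M hvM.2)
  exact ⟨⟨hu'M, htrans _ _ _ hvM.2 hvu'⟩, ⟨htrans _ _ _ hv'u hum.1, hv'm⟩⟩

/-- Claim `mMtags` of the paper: orthogonal complements within
the plane span{u,v} exchange a minimal and a maximal line. -/
theorem stmt16
    (le : Submodule ℝ (EuclideanSpace ℝ (Fin 3)) →
          Submodule ℝ (EuclideanSpace ℝ (Fin 3)) → Prop)
    (hrefl : ∀ A, le A A)
    (htrans : ∀ A B C, le A B → le B C → le A C)
    (htotal : ∀ A B, le A B ∨ le B A)
    (hdeFinetti : ∀ A B C, C ⟂ A → C ⟂ B → (le A B ↔ le (A ⊔ C) (B ⊔ C)))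
    (hneg : ∀ A B, le A B → le Bᗮ Aᗮ)
    (hmono : ∀ A, le ⊥ A)
    (hcont : ∀ v : EuclideanSpace ℝ (Fin 3), ‖v‖ = 1 →
      IsOpen {u : Metric.sphere (0 : EuclideanSpace ℝ (Fin 3)) 1 |
        le (Submodule.span ℝ {(u : EuclideanSpace ℝ (Fin 3))}) (Submodule.span ℝ {v}) ∧
        ¬ le (Submodule.span ℝ {v}) (Submodule.span ℝ {(u : EuclideanSpace ℝ (Fin 3))})} ∧
      IsOpen {u : Metric.sphere (0 : EuclideanSpace ℝ (Fin 3)) 1 |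
        le (Submodule.span ℝ {v}) (Submodule.span ℝ {(u : EuclideanSpace ℝ (Fin 3))}) ∧
        ¬ le (Submodule.span ℝ {(u : EuclideanSpace ℝ (Fin 3))}) (Submodule.span ℝ {v})})
    (m M : Submodule ℝ (EuclideanSpace ℝ (Fin 3)))
    (hm : Module.finrank ℝ m = 1) (hM : Module.finrank ℝ M = 1)
    (hmin : ∀ w : Submodule ℝ (EuclideanSpace ℝ (Fin 3)),
      Module.finrank ℝ w = 1 → le m w)
    (hmax : ∀ w : Submodule ℝ (EuclideanSpace ℝ (Fin 3)),
      Module.finrank ℝ w = 1 → le w M)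
    (hmM : le m M ∧ ¬ le M m)
    (u v u' v' : EuclideanSpace ℝ (Fin 3))
    (hu : ‖u‖ = 1) (hv : ‖v‖ = 1) (hu' : ‖u'‖ = 1) (hv' : ‖v'‖ = 1)
    (hum : le (Submodule.span ℝ {u}) m ∧ le m (Submodule.span ℝ {u}))
    (hvM : le (Submodule.span ℝ {v}) M ∧ le M (Submodule.span ℝ {v}))
    (hne : u ≠ v ∧ u ≠ -v)
    (hu'mem : u' ∈ Submodule.span ℝ {u, v}) (hv'mem : v' ∈ Submodule.span ℝ {u, v})
    (hu'u : inner ℝ u' u = (0 : ℝ)) (hv'v : inner ℝ v' v = (0 : ℝ)) :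
    (le (Submodule.span ℝ {u'}) M ∧ le M (Submodule.span ℝ {u'})) ∧
    (le (Submodule.span ℝ {v'}) m ∧ le m (Submodule.span ℝ {v'})) :=
  stmt16_general le htrans hdeFinetti hneg m M hmin hmax u v u' v' hu hv hu' hv' hum hvM hu'mem
    hv'mem hu'u hv'v
end
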